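/- arXiv:2402.13603 — 4 statements merged into one kernel-verified Lean document; each statement's English description precedes it below -/
import Mathlib

section
/- (Source coding with RaS codes.) Let θ ∈ (0,1) with binary entropy H(θ) = −θ·log₂θ − (1−θ)·log₂(1−θ), and let k < n be positive integers with k·H(θ) < n−k. Then for every ε > 0 there exists an integer m₀ such that for all m ≥ m₀ there exist a matrix G of size (m+1)k × (m+1)(n−k) in the support of the RaS ensemble and a map ψ : F₂^{N−K} → F₂^K (where K = (m+1)k, N = (m+1)n) such that Pr{ψ(U·G) ≠ U} ≤ ε, where U ∈ F₂^K has i.i.d. Bernoulli(θ) components. -/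
open scoped Classical
open Finset

/-!
Split the source `U ∈ F₂^{(m+1)×k}` into its `k` columns, i.i.d. Bernoulli(θ) strings of length
`M = m + 1`, and compress each column with the same linear code `G₀ : F₂^M → F₂^L`,
`L = ⌊M (n - k) / k⌋`, writing the `k` outputs on disjoint coordinates. Every column of every
block of the resulting matrix has at most one nonzero entry, and by the union bound its error is
at most `k` times that of `G₀`.

For `G₀`, Gallager's random-binning argument (a uniformly random matrix, maximum-likelihood
decoding, and `min 1 t ≤ t ^ ρ`) gives, for every `s ∈ [1/2, 1]`, a code with error at most
`(θ^s + (1-θ)^s)^(M/s) · 2^(-L(1-s)/s)`. Since `log (θ^s + (1-θ)^s) = (1 - s) H(θ) + o(1 - s)`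
as `s → 1`, the rate condition `H(θ) < (n - k)/k` yields an `s < 1` for which this bound decays
exponentially in `M`.
-/

open Matrix

lemma surjective_vecMul_of_ne_zero {K ι κ : Type*} [Field K] [Fintype ι] {v : ι → K}
    (hv : v ≠ 0) : Function.Surjective fun G : Matrix ι κ K => v ᵥ* G := by
  obtain ⟨i, hi⟩ := Function.ne_iff.mp hv
  intro y
  refine ⟨vecMulVec (Pi.single i (v i)⁻¹) y, ?_⟩
  simp only [vecMul_vecMulVec, dotProduct_single, mul_inv_cancel₀ hi, one_smul]

lemma sum_ite_vecMul_eq_vecMul {K ι κ : Type*} [Field K] [Fintype K] [DecidableEq K] [Fintype ι]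
    [DecidableEq ι] [Fintype κ] [DecidableEq κ] {u u' : ι → K} (h : u' ≠ u) :
    ∑ G : Matrix ι κ K, (if u' ᵥ* G = u ᵥ* G then 1 else 0 : ℝ) =
      Fintype.card (Matrix ι κ K) * ((Fintype.card K : ℝ) ^ Fintype.card κ)⁻¹ := by
  let f : Matrix ι κ K →+ (κ → K) :=
    { toFun G := (u' - u) ᵥ* G
      map_zero' := vecMul_zero _
      map_add' := fun _ _ => vecMul_add _ _ _ }
  have hf : f.range = ⊤ :=
    AddMonoidHom.range_eq_top.mpr (surjective_vecMul_of_ne_zero (sub_ne_zero.mpr h))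
  have hcard := f.ker.card_mul_index
  rw [AddSubgroup.index_ker, hf, AddSubgroup.card_top, Nat.card_eq_fintype_card (α := κ → K),
    Fintype.card_fun, Nat.card_eq_fintype_card, Nat.card_eq_fintype_card] at hcard
  have hker : (univ.filter fun G : Matrix ι κ K => u' ᵥ* G = u ᵥ* G).card =
      Fintype.card f.ker := by
    rw [Fintype.card_subtype]
    congr 1; ext G
    simp [f, sub_vecMul, sub_eq_zero]
  rw [sum_boole, hker, ← hcard]
  push_cast
  field_simp

section RandomBinning

variable {E X Y : Type*} [Fintype X]

def decodingError [DecidableEq X] (w : X → ℝ) (f : X → Y) (ψ : Y → X) : ℝ :=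
  ∑ x, w x * if ψ (f x) ≠ x then 1 else 0

def IsMaxLikelihoodDecoder (w : X → ℝ) (f : X → Y) (ψ : Y → X) : Prop :=
  ∀ x, f (ψ (f x)) = f x ∧ w x ≤ w (ψ (f x))

lemma exists_isMaxLikelihoodDecoder [Nonempty X] (w : X → ℝ) (f : X → Y) :
    ∃ ψ, IsMaxLikelihoodDecoder w f ψ := by
  have : ∀ y, ∃ z, ∀ x, f x = y → f z = y ∧ w x ≤ w z := by
    intro y
    by_cases h : (univ.filter fun x => f x = y).Nonempty
    · obtain ⟨z, hz, hmax⟩ := exists_max_image _ w h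
      exact ⟨z, fun x hx => ⟨(mem_filter.mp hz).2, hmax x (by simpa using hx)⟩⟩
    · exact ⟨Classical.arbitrary X, fun x hx => (h ⟨x, by simpa using hx⟩).elim⟩
  choose ψ hψ using this
  exact ⟨ψ, fun x => hψ _ x rfl⟩

lemma IsMaxLikelihoodDecoder.ite_ne_le_sum [DecidableEq X] [DecidableEq Y] {w : X → ℝ}
    {f : X → Y} {ψ : Y → X} (hψ : IsMaxLikelihoodDecoder w f ψ) (x : X) :
    (if ψ (f x) ≠ x then 1 else 0 : ℝ) ≤
      ∑ x' ∈ univ.filter (fun x' => x' ≠ x ∧ w x ≤ w x'), if f x' = f x then 1 else 0 := by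
  split_ifs with h
  · obtain ⟨hf, hw⟩ := hψ x
    calc (1 : ℝ) = if f (ψ (f x)) = f x then 1 else 0 := by rw [if_pos hf]
      _ ≤ _ := single_le_sum (f := fun x' => if f x' = f x then (1 : ℝ) else 0)
          (fun _ _ => by positivity) (by simp [h, hw])
  · exact sum_nonneg fun _ _ => by positivity

lemma card_le_sum_rpow_div {w : X → ℝ} (hw : ∀ x, 0 < w x) {s : ℝ} (hs : 0 ≤ s) {x : X}
    {t : Finset X} (ht : ∀ x' ∈ t, w x ≤ w x') :
    (#t : ℝ) ≤ (∑ x', w x' ^ s) / w x ^ s := by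
  rw [le_div_iff₀ (Real.rpow_pos_of_pos (hw x) s), ← nsmul_eq_mul, ← sum_const]
  calc ∑ _x' ∈ t, w x ^ s ≤ ∑ x' ∈ t, w x' ^ s :=
        sum_le_sum fun x' hx' => Real.rpow_le_rpow (hw x).le (ht x' hx') hs
    _ ≤ ∑ x', w x' ^ s :=
        sum_le_sum_of_subset_of_nonneg (subset_univ _) fun x' _ _ =>
          (Real.rpow_pos_of_pos (hw x') s).le

lemma min_one_le_rpow {x ρ : ℝ} (hx : 0 ≤ x) (hρ₀ : 0 ≤ ρ) (hρ₁ : ρ ≤ 1) : min 1 x ≤ x ^ ρ := by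
  rcases le_total x 1 with h | h
  · calc min 1 x ≤ x := min_le_right _ _
      _ = x ^ (1 : ℝ) := (Real.rpow_one x).symm
      _ ≤ x ^ ρ := Real.rpow_le_rpow_of_exponent_ge' hx h hρ₀ hρ₁
  · exact (min_le_left _ _).trans (Real.one_le_rpow h hρ₀)

lemma mul_div_rpow_rpow_eq {a s : ℝ} (ha : 0 < a) (hs : 0 < s) {c : ℝ} (hc : 0 ≤ c) :
    a * (c / a ^ s) ^ ((1 - s) / s) = a ^ s * c ^ ((1 - s) / s) := by
  have hpow : (a ^ s) ^ ((1 - s) / s) = a ^ (1 - s) := by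
    rw [← Real.rpow_mul ha.le]; congr 1; field_simp
  rw [Real.div_rpow hc (Real.rpow_nonneg ha.le _), hpow, mul_div_assoc', div_eq_iff
    (Real.rpow_pos_of_pos ha _).ne', mul_comm (a ^ s), mul_assoc, ← Real.rpow_add ha,
    add_sub_cancel, Real.rpow_one, mul_comm]

variable [Fintype E] [DecidableEq X] [DecidableEq Y] {w : X → ℝ} {δ s : ℝ}

lemma sum_ite_ne_le_of_collision_le (hw : ∀ x, 0 < w x) (hδ : 0 ≤ δ) (hs₀ : 1 / 2 ≤ s)
    (hs₁ : s ≤ 1) {f : E → X → Y} {ψ : E → Y → X} (hψ : ∀ e, IsMaxLikelihoodDecoder w (f e) (ψ e))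
    (hcoll : ∀ x x', x' ≠ x → ∑ e, (if f e x' = f e x then 1 else 0 : ℝ) ≤ Fintype.card E * δ)
    (x : X) :
    ∑ e, (if ψ e (f e x) ≠ x then 1 else 0 : ℝ) ≤
      Fintype.card E * ((∑ x', w x' ^ s) * δ / w x ^ s) ^ ((1 - s) / s) := by
  set T := univ.filter fun x' => x' ≠ x ∧ w x ≤ w x'
  have hs : 0 < s := by linarith
  have hle_one : ∑ e, (if ψ e (f e x) ≠ x then 1 else 0 : ℝ) ≤ Fintype.card E * 1 := by
    rw [mul_one, ← nsmul_one, ← card_univ, ← sum_const]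
    exact sum_le_sum fun e _ => by split_ifs <;> norm_num
  have hle_card : ∑ e, (if ψ e (f e x) ≠ x then 1 else 0 : ℝ) ≤ Fintype.card E * (#T * δ) :=
    calc ∑ e, (if ψ e (f e x) ≠ x then 1 else 0 : ℝ)
        ≤ ∑ e, ∑ x' ∈ T, (if f e x' = f e x then 1 else 0 : ℝ) :=
          sum_le_sum fun e _ => (hψ e).ite_ne_le_sum x
      _ = ∑ x' ∈ T, ∑ e, (if f e x' = f e x then 1 else 0 : ℝ) := sum_comm
      _ ≤ ∑ _x' ∈ T, Fintype.card E * δ :=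
          sum_le_sum fun x' hx' => hcoll x x' (mem_filter.mp hx').2.1
      _ = Fintype.card E * (#T * δ) := by rw [sum_const, nsmul_eq_mul]; ring
  have hT : (#T : ℝ) ≤ (∑ x', w x' ^ s) / w x ^ s :=
    card_le_sum_rpow_div hw hs.le fun x' hx' => (mem_filter.mp hx').2.2
  calc ∑ e, (if ψ e (f e x) ≠ x then 1 else 0 : ℝ)
      ≤ Fintype.card E * min 1 (#T * δ) := by
        rw [mul_min_of_nonneg _ _ (Nat.cast_nonneg _)]; exact le_min hle_one hle_card
    _ ≤ Fintype.card E * (#T * δ) ^ ((1 - s) / s) := by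
        gcongr
        refine min_one_le_rpow (by positivity) (div_nonneg (by linarith) hs.le) ?_
        rw [div_le_one hs]; linarith
    _ ≤ Fintype.card E * ((∑ x', w x' ^ s) * δ / w x ^ s) ^ ((1 - s) / s) := by
        gcongr
        rw [mul_div_right_comm]
        gcongr

theorem exists_decodingError_le_of_collision_le [Nonempty E] [Nonempty X] (hw : ∀ x, 0 < w x)
    (hδ : 0 ≤ δ) (hs₀ : 1 / 2 ≤ s) (hs₁ : s ≤ 1) (f : E → X → Y)
    (hcoll : ∀ x x', x' ≠ x → ∑ e, (if f e x' = f e x then 1 else 0 : ℝ) ≤ Fintype.card E * δ) :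
    ∃ e ψ, decodingError w (f e) ψ ≤ (∑ x, w x ^ s) ^ (1 / s) * δ ^ ((1 - s) / s) := by
  choose ψ hψ using fun e => exists_isMaxLikelihoodDecoder w (f e)
  set S := ∑ x, w x ^ s
  have hs : 0 < s := by linarith
  have hS : 0 ≤ S := sum_nonneg fun x _ => (Real.rpow_pos_of_pos (hw x) s).le
  have hexp : 1 + (1 - s) / s = 1 / s := by field_simp; ring
  have htotal : ∑ e, decodingError w (f e) (ψ e) ≤ ∑ _e : E, S ^ (1 / s) * δ ^ ((1 - s) / s) :=
    calc ∑ e, decodingError w (f e) (ψ e)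
        = ∑ x, w x * ∑ e, (if ψ e (f e x) ≠ x then 1 else 0 : ℝ) := by
          simp only [decodingError, mul_sum]; exact sum_comm
      _ ≤ ∑ x, w x * (Fintype.card E * (S * δ / w x ^ s) ^ ((1 - s) / s)) := by
          gcongr with x
          · exact (hw x).le
          · exact sum_ite_ne_le_of_collision_le hw hδ hs₀ hs₁ hψ hcoll x
      _ = ∑ x, Fintype.card E * (w x ^ s * (S * δ) ^ ((1 - s) / s)) :=
          sum_congr rfl fun x _ => by
            rw [mul_left_comm, mul_div_rpow_rpow_eq (hw x) hs (by positivity)]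
      _ = ∑ _e : E, S ^ (1 / s) * δ ^ ((1 - s) / s) := by
          rw [← mul_sum, ← sum_mul, Real.mul_rpow hS hδ, ← mul_assoc S,
            ← Real.rpow_one_add' hS (by rw [hexp]; positivity), hexp, sum_const, card_univ,
            nsmul_eq_mul]
  obtain ⟨e, -, he⟩ := exists_le_of_sum_le univ_nonempty htotal
  exact ⟨e, ψ e, he⟩

end RandomBinning

theorem exists_vecMul_decodingError_le {K ι κ : Type*} [Field K] [Fintype K] [DecidableEq K]
    [Fintype ι] [DecidableEq ι] [Fintype κ] [DecidableEq κ] {w : (ι → K) → ℝ} (hw : ∀ u, 0 < w u)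
    {s : ℝ} (hs₀ : 1 / 2 ≤ s) (hs₁ : s ≤ 1) :
    ∃ (G : Matrix ι κ K) (ψ : (κ → K) → ι → K), decodingError w (· ᵥ* G) ψ ≤
      (∑ u, w u ^ s) ^ (1 / s) * (((Fintype.card K : ℝ) ^ Fintype.card κ)⁻¹) ^ ((1 - s) / s) :=
  exists_decodingError_le_of_collision_le hw (by positivity) hs₀ hs₁ (fun G u => u ᵥ* G)
    fun _ _ h => (sum_ite_vecMul_eq_vecMul h).le

section Bernoulli

variable {ι : Type*} [Fintype ι] {θ : ℝ}

def bernoulliWeight (θ : ℝ) (u : ι → ZMod 2) : ℝ :=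
  ∏ i, if u i = 1 then θ else 1 - θ

lemma bernoulliWeight_pos (hθ₀ : 0 < θ) (hθ₁ : θ < 1) (u : ι → ZMod 2) :
    0 < bernoulliWeight θ u :=
  prod_pos fun i _ => by split_ifs <;> linarith

lemma sum_prod_apply_eq_pow [DecidableEq ι] {X R : Type*} [Fintype X] [CommSemiring R]
    (g : X → R) : ∑ u : ι → X, ∏ i, g (u i) = (∑ x, g x) ^ Fintype.card ι := by
  rw [← Fintype.prod_sum (fun _ => g), prod_const, card_univ]

lemma sum_bernoulliWeight_rpow [DecidableEq ι] (hθ₀ : 0 ≤ θ) (hθ₁ : θ ≤ 1) (s : ℝ) :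
    ∑ u : ι → ZMod 2, bernoulliWeight θ u ^ s = (θ ^ s + (1 - θ) ^ s) ^ Fintype.card ι := by
  set g : ZMod 2 → ℝ := fun x => (if x = 1 then θ else 1 - θ) ^ s
  have hterm (u : ι → ZMod 2) : bernoulliWeight θ u ^ s = ∏ i, g (u i) :=
    (Real.finsetProd_rpow _ _ (fun i _ => by split_ifs <;> linarith) s).symm
  rw [Fintype.sum_congr _ _ hterm, sum_prod_apply_eq_pow, add_comm]
  congr 1
  rw [show (univ : Finset (ZMod 2)) = {0, 1} by decide, sum_pair (by decide)]
  simp [g]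

lemma sum_bernoulliWeight [DecidableEq ι] (hθ₀ : 0 ≤ θ) (hθ₁ : θ ≤ 1) :
    ∑ u : ι → ZMod 2, bernoulliWeight θ u = 1 := by
  simpa using sum_bernoulliWeight_rpow (ι := ι) hθ₀ hθ₁ 1

lemma sum_prod_mul_apply_of_sum_eq_one {α Y R : Type*} [Fintype α] [DecidableEq α] [Fintype Y]
    [CommSemiring R] {W : Y → R} (hW : ∑ y, W y = 1) (F : Y → R) (a : α) :
    ∑ f : α → Y, (∏ b, W (f b)) * F (f a) = ∑ y, W y * F y :=
  calc ∑ f : α → Y, (∏ b, W (f b)) * F (f a)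
      = ∑ f : α → Y, ∏ b, W (f b) * (if b = a then F (f b) else 1) := by
        simp only [prod_mul_distrib, Fintype.prod_ite_eq']
    _ = ∏ b, ∑ y, W y * (if b = a then F y else 1) :=
        (Fintype.prod_sum fun b y => W y * if b = a then F y else 1).symm
    _ = ∏ b, if b = a then ∑ y, W y * F y else 1 :=
        prod_congr rfl fun b _ => by split_ifs <;> simp [hW]
    _ = ∑ y, W y * F y := Fintype.prod_ite_eq' a _

lemma bernoulliWeight_eq_prod_column {α : Type*} [Fintype α] (u : ι × α → ZMod 2) :
    bernoulliWeight θ u = ∏ a, bernoulliWeight θ fun i => u (i, a) := by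
  rw [bernoulliWeight, Fintype.prod_prod_type, prod_comm]; rfl

lemma sum_bernoulliWeight_mul_apply_column [DecidableEq ι] {α : Type*} [Fintype α] [DecidableEq α]
    (hθ₀ : 0 ≤ θ) (hθ₁ : θ ≤ 1) (F : (ι → ZMod 2) → ℝ) (a : α) :
    ∑ u : ι × α → ZMod 2, bernoulliWeight θ u * F (fun i => u (i, a)) =
      ∑ v : ι → ZMod 2, bernoulliWeight θ v * F v := by
  let e : (α → ι → ZMod 2) ≃ (ι × α → ZMod 2) :=
    ⟨fun f r => f r.2 r.1, fun u a i => u (i, a), fun _ => rfl, fun _ => rfl⟩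
  rw [← e.sum_comp]
  simp only [bernoulliWeight_eq_prod_column]
  exact sum_prod_mul_apply_of_sum_eq_one (sum_bernoulliWeight hθ₀ hθ₁) F a

end Bernoulli

section ParallelCode

variable {K ι κ α γ : Type*}

/-- Column `a` of the source, `u (·, a)`, is encoded by `G₀` onto the output coordinates
`e (a, ·)`; all other output coordinates are unused. -/
noncomputable def parallelCode [Zero K] (e : α × κ ↪ γ) (G₀ : Matrix ι κ K) :
    Matrix (ι × α) γ K :=
  Matrix.of fun r => Function.extend (fun l => e (r.2, l)) (G₀ r.1) 0

def parallelDecoder (e : α × κ ↪ γ) (ψ₀ : (κ → K) → ι → K) : (γ → K) → ι × α → K :=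
  fun y r => ψ₀ (fun l => y (e (r.2, l))) r.1

lemma parallelCode_apply_embedding [Zero K] (e : α × κ ↪ γ) (G₀ : Matrix ι κ K) (i : ι)
    (a b : α) (l : κ) : parallelCode e G₀ (i, b) (e (a, l)) = if b = a then G₀ i l else 0 := by
  split_ifs with h
  · subst h
    exact (e.injective.comp (Prod.mk_right_injective b)).extend_apply _ _ l
  · refine Function.extend_apply' _ _ _ ?_
    rintro ⟨l', hl'⟩
    exact h (congrArg Prod.fst (e.injective hl'))

lemma card_filter_parallelCode_ne_zero_le_one [Zero K] [DecidableEq K] [Fintype α]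
    (e : α × κ ↪ γ) (G₀ : Matrix ι κ K) (i : ι) (c : γ) :
    #(univ.filter fun a => parallelCode e G₀ (i, a) c ≠ 0) ≤ 1 := by
  have hrange : ∀ a, parallelCode e G₀ (i, a) c ≠ 0 → ∃ l, e (a, l) = c := by
    intro a ha
    by_contra hc
    exact ha (Function.extend_apply' _ _ _ hc)
  refine card_le_one.mpr fun a ha a' ha' => ?_
  obtain ⟨l, rfl⟩ := hrange a (mem_filter.mp ha).2
  obtain ⟨l', hl'⟩ := hrange a' (mem_filter.mp ha').2
  exact (congrArg Prod.fst (e.injective hl')).symm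

lemma vecMul_parallelCode_apply [Semiring K] [Fintype ι] [Fintype α] (e : α × κ ↪ γ)
    (G₀ : Matrix ι κ K) (u : ι × α → K) (a : α) (l : κ) :
    (u ᵥ* parallelCode e G₀) (e (a, l)) = ((fun i => u (i, a)) ᵥ* G₀) l := by
  simp only [vecMul, dotProduct, Fintype.sum_prod_type, parallelCode_apply_embedding, mul_ite,
    mul_zero, sum_ite_eq', mem_univ, if_true]

lemma parallelDecoder_vecMul_parallelCode [Semiring K] [Fintype ι] [Fintype α]
    (e : α × κ ↪ γ) (G₀ : Matrix ι κ K) (ψ₀ : (κ → K) → ι → K) (u : ι × α → K) :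
    parallelDecoder e ψ₀ (u ᵥ* parallelCode e G₀) =
      fun r => ψ₀ ((fun i => u (i, r.2)) ᵥ* G₀) r.1 := by
  ext r
  simp only [parallelDecoder, vecMul_parallelCode_apply]

lemma decodingError_parallelCode_le [Fintype ι] [DecidableEq ι] [Fintype α] [DecidableEq α]
    {θ : ℝ} (hθ₀ : 0 ≤ θ) (hθ₁ : θ ≤ 1) (e : α × κ ↪ γ) (G₀ : Matrix ι κ (ZMod 2))
    (ψ₀ : (κ → ZMod 2) → ι → ZMod 2) :
    decodingError (bernoulliWeight θ) (· ᵥ* parallelCode e G₀) (parallelDecoder e ψ₀) ≤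
      Fintype.card α * decodingError (bernoulliWeight θ) (· ᵥ* G₀) ψ₀ := by
  have hunion (u : ι × α → ZMod 2) :
      (if parallelDecoder e ψ₀ (u ᵥ* parallelCode e G₀) ≠ u then 1 else 0 : ℝ) ≤
        ∑ a, if ψ₀ ((fun i => u (i, a)) ᵥ* G₀) ≠ fun i => u (i, a) then 1 else 0 := by
    rw [parallelDecoder_vecMul_parallelCode]
    split_ifs with h
    · obtain ⟨⟨i, a⟩, hia⟩ := Function.ne_iff.mp h
      have ha : ψ₀ ((fun i => u (i, a)) ᵥ* G₀) ≠ fun i => u (i, a) :=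
        fun h' => hia (congrFun h' i)
      exact (if_pos ha).symm.le.trans <| single_le_sum (f := fun a =>
        if ψ₀ ((fun i => u (i, a)) ᵥ* G₀) ≠ fun i => u (i, a) then (1 : ℝ) else 0)
        (fun _ _ => by positivity) (mem_univ a)
    · exact sum_nonneg fun _ _ => by positivity
  calc decodingError (bernoulliWeight θ) (· ᵥ* parallelCode e G₀) (parallelDecoder e ψ₀)
      ≤ ∑ u : ι × α → ZMod 2, bernoulliWeight θ u *
          ∑ a, if ψ₀ ((fun i => u (i, a)) ᵥ* G₀) ≠ fun i => u (i, a) then 1 else 0 :=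
        sum_le_sum fun u _ =>
          mul_le_mul_of_nonneg_left (hunion u) (prod_nonneg fun _ _ => by split_ifs <;> linarith)
    _ = ∑ _a : α, decodingError (bernoulliWeight θ) (· ᵥ* G₀) ψ₀ := by
        simp only [mul_sum]
        rw [sum_comm]
        exact sum_congr rfl fun a _ => sum_bernoulliWeight_mul_apply_column hθ₀ hθ₁
          (fun v => if ψ₀ (v ᵥ* G₀) ≠ v then 1 else 0) a
    _ = Fintype.card α * decodingError (bernoulliWeight θ) (· ᵥ* G₀) ψ₀ := by
        rw [sum_const, card_univ, nsmul_eq_mul]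

end ParallelCode

section Exponent

open Filter Topology Real

lemma binEntropy_div_log_two (θ : ℝ) :
    binEntropy θ / log 2 = -θ * logb 2 θ - (1 - θ) * logb 2 (1 - θ) := by
  simp only [binEntropy, log_inv, logb]; ring

lemma exists_log_rpow_add_rpow_lt {θ r : ℝ} (hθ₀ : 0 < θ) (hθ₁ : θ < 1)
    (hr : binEntropy θ < r) :
    ∃ s ∈ Set.Ico (1 / 2 : ℝ) 1, log (θ ^ s + (1 - θ) ^ s) < (1 - s) * r := by
  set φ : ℝ → ℝ := fun s => log (θ ^ s + (1 - θ) ^ s)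
  have hφ : φ 1 = 0 := by simp [φ]
  have hderiv : HasDerivAt φ (-binEntropy θ) 1 := by
    have hsum := ((hasStrictDerivAt_const_rpow hθ₀ 1).add
      (hasStrictDerivAt_const_rpow (sub_pos.mpr hθ₁) 1)).hasDerivAt
    convert hsum.log (by simp) using 1
    · rfl
    · simp only [Pi.add_apply, rpow_one, add_sub_cancel, div_one, binEntropy, log_inv]
      ring
  have hslope : Tendsto (slope φ 1) (𝓝[<] 1) (𝓝 (-binEntropy θ)) :=
    (hasDerivAt_iff_tendsto_slope.mp hderiv).mono_left
      (nhdsWithin_mono _ fun s hs => ne_of_lt hs)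
  obtain ⟨s, hs, hsI⟩ := ((hslope.eventually (lt_mem_nhds (neg_lt_neg hr))).and
    (Ioo_mem_nhdsLT (by norm_num : (1 / 2 : ℝ) < 1))).exists
  refine ⟨s, ⟨hsI.1.le, hsI.2⟩, ?_⟩
  rw [slope_def_field, hφ, sub_zero, lt_div_iff_of_neg (by linarith [hsI.2])] at hs
  linarith

lemma tendsto_rpow_mul_inv_two_pow_floor {A s R : ℝ} (hA : 0 < A) (hs₀ : 0 < s) (hs₁ : s ≤ 1)
    (hAR : log A < (1 - s) * (R * log 2)) :
    Tendsto (fun M : ℕ => (A ^ M) ^ (1 / s) * (((2 : ℝ) ^ ⌊M * R⌋₊)⁻¹) ^ ((1 - s) / s))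
      atTop (𝓝 0) := by
  set δ := ((1 - s) * (R * log 2) - log A) / s
  have hδ : 0 < δ := div_pos (by linarith) hs₀
  have hbound (M : ℕ) : (A ^ M) ^ (1 / s) * (((2 : ℝ) ^ ⌊M * R⌋₊)⁻¹) ^ ((1 - s) / s) ≤
      exp ((1 - s) / s * log 2) * exp (-δ) ^ M := by
    rw [rpow_def_of_pos (pow_pos hA M), rpow_def_of_pos (by positivity), ← exp_add,
      ← exp_nat_mul, ← exp_add, exp_le_exp, log_pow, log_inv, log_pow]
    have hfloor := Nat.lt_floor_add_one ((M : ℝ) * R)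
    have hgap : (1 - s) / s * log 2 + M * -δ -
        (M * log A * (1 / s) + -(⌊(M : ℝ) * R⌋₊ * log 2) * ((1 - s) / s)) =
        (1 - s) * log 2 * (⌊(M : ℝ) * R⌋₊ + 1 - M * R) / s := by
      simp only [δ]; field_simp; ring
    have : 0 ≤ (1 - s) * log 2 * (⌊(M : ℝ) * R⌋₊ + 1 - M * R) / s := by
      have := log_pos one_lt_two
      apply div_nonneg _ hs₀.le
      apply mul_nonneg (mul_nonneg _ this.le) _ <;> linarith
    linarith
  refine squeeze_zero (fun M => by positivity) hbound ?_
  simpa using (tendsto_pow_atTop_nhds_zero_of_lt_one (exp_pos _).le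
    (exp_lt_one_iff.mpr (neg_lt_zero.mpr hδ))).const_mul (exp ((1 - s) / s * log 2))

end Exponent

lemma mul_floor_mul_div_le (M N k : ℕ) : k * ⌊(M : ℝ) * (N / k)⌋₊ ≤ M * N := by
  rw [← mul_div_assoc, ← Nat.cast_mul, Nat.floor_div_eq_div]
  exact Nat.mul_div_le _ _

theorem exists_RaS_code_decodingError_le {θ s : ℝ} (hθ₀ : 0 < θ) (hθ₁ : θ < 1) (hs₀ : 1 / 2 ≤ s)
    (hs₁ : s ≤ 1) {M k N L : ℕ} (hL : k * L ≤ M * N) :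
    ∃ (G : Matrix (Fin M × Fin k) (Fin M × Fin N) (ZMod 2))
      (ψ : (Fin M × Fin N → ZMod 2) → Fin M × Fin k → ZMod 2),
      (∀ (i j : Fin M) (b : Fin N), #(univ.filter fun a : Fin k => G (i, a) (j, b) = 1) ≤ 1) ∧
      decodingError (bernoulliWeight θ) (· ᵥ* G) ψ ≤
        k * (((θ ^ s + (1 - θ) ^ s) ^ M) ^ (1 / s) * (((2 : ℝ) ^ L)⁻¹) ^ ((1 - s) / s)) := by
  obtain ⟨e⟩ : Nonempty (Fin k × Fin L ↪ Fin M × Fin N) :=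
    Function.Embedding.nonempty_of_card_le (by simpa using hL)
  obtain ⟨G₀, ψ₀, hG₀⟩ := exists_vecMul_decodingError_le (κ := Fin L)
    (bernoulliWeight_pos (ι := Fin M) hθ₀ hθ₁) hs₀ hs₁
  rw [sum_bernoulliWeight_rpow hθ₀.le hθ₁.le, ZMod.card, Fintype.card_fin, Fintype.card_fin,
    Nat.cast_ofNat] at hG₀
  refine ⟨parallelCode e G₀, parallelDecoder e ψ₀, fun i j b => ?_, ?_⟩
  · exact (card_le_card (monotone_filter_right _ fun _ _ h => h ▸ one_ne_zero)).trans
      (card_filter_parallelCode_ne_zero_le_one e G₀ i (j, b))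
  · calc _ ≤ k * decodingError (bernoulliWeight θ) (· ᵥ* G₀) ψ₀ := by
          simpa using decodingError_parallelCode_le hθ₀.le hθ₁.le e G₀ ψ₀
      _ ≤ _ := by gcongr

/-- **Source coding with RaS codes.**
If `k·H(θ) < n−k` (where `H(θ)` is the binary entropy), then for every `ε > 0` there is
`m₀` such that for all `m ≥ m₀` some matrix `G` in the support of the RaS ensemble
(every column of every `k×(n−k)` block has Hamming weight at most 1) together with some
decompressor `ψ` satisfies `Pr{ψ(U·G) ≠ U} ≤ ε`, where `U ∈ F₂^K` has i.i.d.
Bernoulli(θ) components, `K = (m+1)k`. -/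
theorem RaS_source_coding_theorem
    (θ : ℝ) (hθ0 : 0 < θ) (hθ1 : θ < 1)
    (k n : ℕ) (hk : 0 < k) (hkn : k < n)
    (hrate : (k : ℝ) * (-θ * Real.logb 2 θ - (1 - θ) * Real.logb 2 (1 - θ))
      < (n : ℝ) - k)
    (ε : ℝ) (hε : 0 < ε) :
    ∃ m₀ : ℕ, ∀ m ≥ m₀,
      ∃ (G : Matrix (Fin (m + 1) × Fin k) (Fin (m + 1) × Fin (n - k)) (ZMod 2))
        (ψ : ((Fin (m + 1) × Fin (n - k)) → ZMod 2) → ((Fin (m + 1) × Fin k) → ZMod 2)),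
        -- G lies in the support of the RaS ensemble
        (∀ (i j : Fin (m + 1)) (b : Fin (n - k)),
          (Finset.univ.filter (fun a : Fin k => G (i, a) (j, b) = 1)).card ≤ 1) ∧
        -- error probability of the compression scheme is at most ε
        ∑ u : (Fin (m + 1) × Fin k) → ZMod 2,
          ((∏ i, (if u i = 1 then θ else 1 - θ)) *
            (if ψ (Matrix.vecMul u G) ≠ u then 1 else 0)) ≤ ε := by
  have hk' : (0 : ℝ) < k := Nat.cast_pos.mpr hk
  set R : ℝ := ((n - k : ℕ) : ℝ) / k with hR
  have hH : Real.binEntropy θ < R * Real.log 2 := by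
    rw [← div_lt_iff₀ (Real.log_pos one_lt_two), binEntropy_div_log_two, hR,
      Nat.cast_sub hkn.le, lt_div_iff₀ hk']
    linarith
  obtain ⟨s, ⟨hs₀, hs₁⟩, hlog⟩ := exists_log_rpow_add_rpow_lt hθ0 hθ1 hH
  have hdecay := ((tendsto_rpow_mul_inv_two_pow_floor (by positivity) (by linarith) hs₁.le
    hlog).comp (Filter.tendsto_add_atTop_nat 1)).const_mul (k : ℝ)
  rw [mul_zero] at hdecay
  obtain ⟨m₀, hm₀⟩ := Filter.eventually_atTop.mp (hdecay.eventually (eventually_le_nhds hε))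
  refine ⟨m₀, fun m hm => ?_⟩
  obtain ⟨G, ψ, hG, herr⟩ := exists_RaS_code_decodingError_le hθ0 hθ1 hs₀ hs₁.le
    (mul_floor_mul_div_le (m + 1) (n - k) k)
  exact ⟨G, ψ, hG, herr.trans (hm₀ m hm)⟩
end

section
/- (The parity-check code ensemble associated with the RaS ensemble achieves capacity.) Let a BIOS memoryless channel with finite output alphabet 𝒴 have capacity C = I(1/2), and let k, n be positive integers with k < n < 2k and (2k−n)/k < C. Then for every ε > 0 there exists an integer m₀ such that for all m ≥ m₀ there exists a matrix G of size (m+1)k × (m+1)(n−k) in the support of the RaS ensemble such that the linear code 𝒞 = {u ∈ F₂^K : u·G = 0} (K = (m+1)k) has dimension at least (2k−n)(m+1), and there is a decoder ψ : 𝒴^K → F₂^K with Pr{ψ(V) ≠ U} ≤ ε, where U is uniformly distributed on 𝒞 and V is the output of K independent channel uses with input U. -/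
open scoped Classical
open Finset

/-- Output distribution `P_p(y) = (1−p)·P(y|0) + p·P(y|1)`. -/
noncomputable def outDist {𝒴 : Type} [Fintype 𝒴] (P : ZMod 2 → 𝒴 → ℝ) (p : ℝ)
    (y : 𝒴) : ℝ := (1 - p) * P 0 y + p * P 1 y

/-- Partial mutual information `I_0(p)`. -/
noncomputable def partialMI0 {𝒴 : Type} [Fintype 𝒴] (P : ZMod 2 → 𝒴 → ℝ) (p : ℝ) : ℝ :=
  ∑ y : 𝒴, P 0 y * Real.logb 2 (P 0 y / outDist P p y)

/-- Partial mutual information `I_1(p)`. -/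
noncomputable def partialMI1 {𝒴 : Type} [Fintype 𝒴] (P : ZMod 2 → 𝒴 → ℝ) (p : ℝ) : ℝ :=
  ∑ y : 𝒴, P 1 y * Real.logb 2 (P 1 y / outDist P p y)

/-- Mutual information `I(p) = (1−p)·I_0(p) + p·I_1(p)`. -/
noncomputable def mutualInfo {𝒴 : Type} [Fintype 𝒴] (P : ZMod 2 → 𝒴 → ℝ) (p : ℝ) : ℝ :=
  (1 - p) * partialMI0 P p + p * partialMI1 P p

/-!
Random coding over the ensemble in which every column of every block `G_{i,j}` is,
independently and uniformly, zero or one of the `k` unit vectors, decoded by thresholding the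
likelihood ratio `L(c, v) = ∏ P(v_i|c_i) / P_{1/2}(v_i)` at `A = 2^{K(C-δ)}`.

The transmitted word `u` falls below the threshold with probability `O(1/K)` by Chebyshev's
inequality: `log₂ L(u, V)` is a sum of `K` independent information densities, each of mean `C`
for either input by the symmetry `π`. A wrong word `u + w` clears it with probability at most
`A⁻¹ E[L(u + w, V)]`, and `∑_w E[L(u + w, V)] = 2^K`.

Over the ensemble, a nonzero `w` with `s` nonzero blocks (of length `k`) is a codeword with
probability at most `((1 + θ^s)/2)^{N-K}`, where `θ = (k-1)/(k+1)`. Words with fewer than `s₀`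
nonzero blocks are only polynomially many in `m`, each a codeword with probability at most
`((1 + θ)/2)^{N-K}`; the others contribute at most `(((1 + θ^{s₀})/2)^{n-k} 2^{k(1-C+δ)})^{m+1}`,
which tends to `0` once `s₀` is large, since `(2k - n)/k < C - δ`. The dimension bound is
rank–nullity.
-/

open scoped Matrix
open Filter Topology

lemma zmod_two_eq_zero_or_eq_one (x : ZMod 2) : x = 0 ∨ x = 1 := by
  revert x; decide

lemma sum_zmod_two {M : Type*} [AddCommMonoid M] (f : ZMod 2 → M) : ∑ x, f x = f 0 + f 1 :=
  Fin.sum_univ_two f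

def parityChar : AddChar (ZMod 2) ℝ where
  toFun x := if x = 0 then 1 else -1
  map_zero_eq_one' := if_pos rfl
  map_add_eq_mul' x y := by
    rcases zmod_two_eq_zero_or_eq_one x with rfl | rfl <;>
      rcases zmod_two_eq_zero_or_eq_one y with rfl | rfl <;>
      simp [show (1 + 1 : ZMod 2) = 0 from rfl]

lemma parityChar_apply (x : ZMod 2) : parityChar x = if x = 0 then 1 else -1 := rfl

lemma parityChar_sum {α : Type*} (s : Finset α) (f : α → ZMod 2) :
    parityChar (∑ a ∈ s, f a) = ∏ a ∈ s, parityChar (f a) := by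
  induction s using Finset.induction_on with
  | empty => simp
  | insert a s ha ih => rw [sum_insert ha, prod_insert ha, AddChar.map_add_eq_mul, ih]

lemma ite_eq_zero_eq_parityChar (x : ZMod 2) :
    (if x = 0 then (1 : ℝ) else 0) = (1 + parityChar x) / 2 := by
  rcases zmod_two_eq_zero_or_eq_one x with rfl | rfl <;> norm_num [parityChar_apply]

lemma abs_one_add_sum_parityChar_le {K : Type*} [Fintype K] {g : K → ZMod 2} (hg : g ≠ 0) :
    |1 + ∑ a, parityChar (g a)| ≤ Fintype.card K - 1 := by
  obtain ⟨a₀, ha₀⟩ : ∃ a, g a ≠ 0 := Function.ne_iff.1 hg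
  have hrest : |∑ a ∈ univ.erase a₀, parityChar (g a)| ≤ Fintype.card K - 1 := by
    calc _ ≤ ∑ a ∈ univ.erase a₀, |parityChar (g a)| := abs_sum_le_sum_abs _ _
      _ ≤ ∑ a ∈ univ.erase a₀, (1 : ℝ) :=
        sum_le_sum fun a _ => by rw [parityChar_apply]; split_ifs <;> norm_num
      _ = Fintype.card K - 1 := by
        rw [sum_const, card_erase_of_mem (mem_univ _), card_univ, nsmul_eq_mul, mul_one,
          Nat.cast_sub (Fintype.card_pos_iff.2 ⟨a₀⟩), Nat.cast_one]
  rwa [← add_sum_erase _ _ (mem_univ a₀), parityChar_apply, if_neg ha₀, add_neg_cancel_left]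

section ProductDistribution

variable {ι 𝒴 : Type*} [Fintype ι] [DecidableEq ι] [Fintype 𝒴]

lemma sum_prod_mul_prod (p g : ι → 𝒴 → ℝ) :
    ∑ v : ι → 𝒴, (∏ i, p i (v i)) * ∏ i, g i (v i) = ∏ i, ∑ y, p i y * g i y := by
  simp_rw [← prod_mul_distrib, Fintype.prod_sum]

lemma sum_prod_eq_one {p : ι → 𝒴 → ℝ} (hp : ∀ i, ∑ y, p i y = 1) :
    ∑ v : ι → 𝒴, ∏ i, p i (v i) = 1 := by
  simpa [hp] using sum_prod_mul_prod p 1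

lemma sum_prod_mul_apply {p : ι → 𝒴 → ℝ} (hp : ∀ i, ∑ y, p i y = 1) (f : 𝒴 → ℝ) (i : ι) :
    ∑ v : ι → 𝒴, (∏ l, p l (v l)) * f (v i) = ∑ y, p i y * f y := by
  have hprod : ∀ v : ι → 𝒴, f (v i) = ∏ l, if l = i then f (v l) else 1 := fun v => by
    rw [prod_ite_eq', if_pos (mem_univ _)]
  simp_rw [hprod]
  rw [sum_prod_mul_prod (g := fun l y => if l = i then f y else 1),
    ← mul_prod_erase _ _ (mem_univ i)]
  simp [hp]

lemma sum_prod_mul_apply_mul_apply {p : ι → 𝒴 → ℝ} (hp : ∀ i, ∑ y, p i y = 1)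
    (f g : 𝒴 → ℝ) {i j : ι} (hij : i ≠ j) :
    ∑ v : ι → 𝒴, (∏ l, p l (v l)) * (f (v i) * g (v j)) =
      (∑ y, p i y * f y) * ∑ y, p j y * g y := by
  have hprod : ∀ v : ι → 𝒴, f (v i) * g (v j) =
      ∏ l, (if l = i then f (v l) else 1) * (if l = j then g (v l) else 1) := fun v => by
    rw [prod_mul_distrib, prod_ite_eq', prod_ite_eq', if_pos (mem_univ _), if_pos (mem_univ _)]
  simp_rw [hprod]
  rw [sum_prod_mul_prod (g := fun l y => (if l = i then f y else 1) * (if l = j then g y else 1)),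
    ← mul_prod_erase _ _ (mem_univ i), ← mul_prod_erase _ _ (mem_erase.2 ⟨hij.symm, mem_univ j⟩),
    prod_eq_one fun l hl => ?_]
  · simp [hij, hij.symm]
  · simp only [mem_erase] at hl
    simp [hl.1, hl.2.1, hp]

lemma sum_prod_mul_sq_sum_le {p f : ι → 𝒴 → ℝ} (hp : ∀ i, ∑ y, p i y = 1)
    (hmean : ∀ i, ∑ y, p i y * f i y = 0) {V : ℝ} (hvar : ∀ i, ∑ y, p i y * f i y ^ 2 ≤ V) :
    ∑ v : ι → 𝒴, (∏ i, p i (v i)) * (∑ i, f i (v i)) ^ 2 ≤ Fintype.card ι * V := by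
  have hcross : ∀ i j, ∑ v : ι → 𝒴, (∏ l, p l (v l)) * (f i (v i) * f j (v j)) =
      if i = j then ∑ y, p i y * f i y ^ 2 else 0 := by
    intro i j
    split_ifs with hij
    · subst hij
      simp_rw [← sq]
      exact sum_prod_mul_apply hp (fun y => f i y ^ 2) i
    · rw [sum_prod_mul_apply_mul_apply hp _ _ hij, hmean, zero_mul]
  calc ∑ v : ι → 𝒴, (∏ i, p i (v i)) * (∑ i, f i (v i)) ^ 2
      = ∑ i, ∑ j, ∑ v : ι → 𝒴, (∏ l, p l (v l)) * (f i (v i) * f j (v j)) := by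
        simp_rw [sq, sum_mul_sum, mul_sum]
        rw [sum_comm]
        exact sum_congr rfl fun i _ => sum_comm
    _ ≤ ∑ _i : ι, V := by
        simp_rw [hcross, sum_ite_eq, if_pos (mem_univ _)]
        exact sum_le_sum fun i _ => hvar i
    _ = Fintype.card ι * V := by simp

lemma sum_prod_mul_ite_le_of_le_abs {p f : ι → 𝒴 → ℝ} (hp0 : ∀ i y, 0 ≤ p i y)
    (hp : ∀ i, ∑ y, p i y = 1) (hmean : ∀ i, ∑ y, p i y * f i y = 0) {V : ℝ}
    (hvar : ∀ i, ∑ y, p i y * f i y ^ 2 ≤ V) {t : ℝ} (ht : 0 < t) (E : (ι → 𝒴) → Prop)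
    (hE : ∀ v, E v → (∏ i, p i (v i)) ≠ 0 → t ≤ |∑ i, f i (v i)|) :
    ∑ v : ι → 𝒴, (∏ i, p i (v i)) * (if E v then 1 else 0) ≤ Fintype.card ι * V / t ^ 2 := by
  have hpoint : ∀ v : ι → 𝒴, (∏ i, p i (v i)) * (if E v then 1 else 0) ≤
      (∏ i, p i (v i)) * (∑ i, f i (v i)) ^ 2 / t ^ 2 := by
    intro v
    have hμ : 0 ≤ ∏ i, p i (v i) := prod_nonneg fun i _ => hp0 i (v i)
    split_ifs with hv
    · rcases hμ.eq_or_lt with h0 | hpos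
      · rw [← h0]; simp
      · have hsq : t ^ 2 ≤ (∑ i, f i (v i)) ^ 2 := by
          simpa only [sq_abs] using pow_le_pow_left₀ ht.le (hE v hv hpos.ne') 2
        rw [le_div_iff₀ (by positivity), mul_one]
        exact mul_le_mul_of_nonneg_left hsq hμ
    · rw [mul_zero]; positivity
  calc _ ≤ ∑ v : ι → 𝒴, (∏ i, p i (v i)) * (∑ i, f i (v i)) ^ 2 / t ^ 2 :=
        sum_le_sum fun v _ => hpoint v
    _ ≤ Fintype.card ι * V / t ^ 2 := by
        rw [← sum_div]
        exact div_le_div_of_nonneg_right (sum_prod_mul_sq_sum_le hp hmean hvar) (by positivity)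

end ProductDistribution

section Channel

variable {𝒴 : Type} [Fintype 𝒴] (P : ZMod 2 → 𝒴 → ℝ)

lemma outDist_half (y : 𝒴) : outDist P (1 / 2) y = (P 0 y + P 1 y) / 2 := by
  unfold outDist; ring

noncomputable def infoDensity (x : ZMod 2) (y : 𝒴) : ℝ :=
  Real.logb 2 (P x y / outDist P (1 / 2) y)

noncomputable def dispersion : ℝ :=
  ∑ y, P 0 y * (infoDensity P 0 y - mutualInfo P (1 / 2)) ^ 2

noncomputable def crossRatio (x : ZMod 2) : ℝ :=
  ∑ y, P 0 y * (P x y / outDist P (1 / 2) y)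

noncomputable def likelihoodRatio {ι : Type*} [Fintype ι] (c : ι → ZMod 2) (v : ι → 𝒴) : ℝ :=
  ∏ i, P (c i) (v i) / outDist P (1 / 2) (v i)

variable {P}

lemma outDist_half_nonneg (hPnonneg : ∀ x y, 0 ≤ P x y) (y : 𝒴) : 0 ≤ outDist P (1 / 2) y := by
  rw [outDist_half]; have := hPnonneg 0 y; have := hPnonneg 1 y; positivity

lemma crossRatio_nonneg (hPnonneg : ∀ x y, 0 ≤ P x y) (x : ZMod 2) : 0 ≤ crossRatio P x :=
  sum_nonneg fun y _ =>
    mul_nonneg (hPnonneg 0 y) (div_nonneg (hPnonneg x y) (outDist_half_nonneg hPnonneg y))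

lemma sum_crossRatio (hPnonneg : ∀ x y, 0 ≤ P x y) (hPsum : ∀ x, ∑ y, P x y = 1) :
    ∑ x, crossRatio P x = 2 := by
  have hy : ∀ y, ∑ x : ZMod 2, P 0 y * (P x y / outDist P (1 / 2) y) = 2 * P 0 y := by
    intro y
    rw [sum_zmod_two, outDist_half]
    rcases (add_nonneg (hPnonneg 0 y) (hPnonneg 1 y)).eq_or_lt with h0 | hpos
    · have : P 0 y = 0 := by linarith [hPnonneg 0 y, hPnonneg 1 y]
      simp [this]
    · field_simp
  unfold crossRatio
  rw [sum_comm, sum_congr rfl fun y _ => hy y, ← mul_sum, hPsum, mul_one]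

variable {π : 𝒴 → 𝒴}

lemma sum_comp_swap (hπ : ∀ y, π (π y) = y) (hsym : ∀ y, P 1 y = P 0 (π y))
    (Φ : ℝ → ℝ → ℝ → ℝ) :
    ∑ y, Φ (P 1 y) (P 0 y) (outDist P (1 / 2) y) =
      ∑ y, Φ (P 0 y) (P 1 y) (outDist P (1 / 2) y) := by
  have h0 : ∀ y, P 0 y = P 1 (π y) := fun y => by rw [hsym, hπ]
  have hout : ∀ y, outDist P (1 / 2) y = outDist P (1 / 2) (π y) := fun y => by
    rw [outDist_half, outDist_half, ← hsym, ← h0, add_comm]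
  calc ∑ y, Φ (P 1 y) (P 0 y) (outDist P (1 / 2) y)
      = ∑ y, Φ (P 0 (π y)) (P 1 (π y)) (outDist P (1 / 2) (π y)) := by
        simp_rw [← hsym, ← h0, ← hout]
    _ = _ := Equiv.sum_comp (Function.Involutive.toPerm π hπ)
        fun y => Φ (P 0 y) (P 1 y) (outDist P (1 / 2) y)

lemma sum_comp_infoDensity (hπ : ∀ y, π (π y) = y) (hsym : ∀ y, P 1 y = P 0 (π y))
    (F : ℝ → ℝ → ℝ) (x : ZMod 2) :
    ∑ y, F (P x y) (infoDensity P x y) = ∑ y, F (P 0 y) (infoDensity P 0 y) := by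
  rcases zmod_two_eq_zero_or_eq_one x with rfl | rfl
  · rfl
  · exact sum_comp_swap hπ hsym fun a _ o => F a (Real.logb 2 (a / o))

lemma sum_mul_infoDensity (hπ : ∀ y, π (π y) = y) (hsym : ∀ y, P 1 y = P 0 (π y))
    (x : ZMod 2) : ∑ y, P x y * infoDensity P x y = mutualInfo P (1 / 2) := by
  have h10 : partialMI1 P (1 / 2) = partialMI0 P (1 / 2) :=
    sum_comp_infoDensity hπ hsym (fun a z => a * z) 1
  rw [sum_comp_infoDensity hπ hsym (fun a z => a * z), mutualInfo, h10]
  unfold partialMI0 infoDensity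
  ring

lemma sum_mul_infoDensity_sub_sq (hπ : ∀ y, π (π y) = y) (hsym : ∀ y, P 1 y = P 0 (π y))
    (x : ZMod 2) :
    ∑ y, P x y * (infoDensity P x y - mutualInfo P (1 / 2)) ^ 2 = dispersion P :=
  sum_comp_infoDensity hπ hsym (fun a z => a * (z - mutualInfo P (1 / 2)) ^ 2) x

lemma sum_mul_div_outDist_add (hπ : ∀ y, π (π y) = y) (hsym : ∀ y, P 1 y = P 0 (π y))
    (x w : ZMod 2) : ∑ y, P x y * (P (x + w) y / outDist P (1 / 2) y) = crossRatio P w := by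
  rcases zmod_two_eq_zero_or_eq_one x with rfl | rfl
  · simp [crossRatio]
  · rcases zmod_two_eq_zero_or_eq_one w with rfl | rfl
    · exact sum_comp_swap hπ hsym fun a _ o => a * (a / o)
    · exact sum_comp_swap hπ hsym fun a b o => a * (b / o)

end Channel

section BlockChannel

variable {𝒴 : Type} [Fintype 𝒴] {P : ZMod 2 → 𝒴 → ℝ} {π : 𝒴 → 𝒴}
  {ι : Type*} [Fintype ι] [DecidableEq ι]

omit [DecidableEq ι] in
lemma likelihoodRatio_eq_rpow (hPnonneg : ∀ x y, 0 ≤ P x y) {c : ι → ZMod 2} {v : ι → 𝒴}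
    (hcv : ∀ i, P (c i) (v i) ≠ 0) :
    likelihoodRatio P c v = 2 ^ ∑ i, infoDensity P (c i) (v i) := by
  rw [Real.rpow_sum_of_pos two_pos]
  refine prod_congr rfl fun i _ => (Real.rpow_logb two_pos (by norm_num) ?_).symm
  have hpos := (hPnonneg (c i) (v i)).lt_of_ne' (hcv i)
  have hle : P (c i) (v i) ≤ P 0 (v i) + P 1 (v i) := by
    rcases zmod_two_eq_zero_or_eq_one (c i) with h | h <;> rw [h] <;>
      linarith [hPnonneg 0 (v i), hPnonneg 1 (v i)]
  exact div_pos hpos (by rw [outDist_half]; linarith)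

lemma sum_prod_mul_ite_likelihoodRatio_lt_le (hπ : ∀ y, π (π y) = y)
    (hsym : ∀ y, P 1 y = P 0 (π y)) (hPnonneg : ∀ x y, 0 ≤ P x y) (hPsum : ∀ x, ∑ y, P x y = 1)
    [Nonempty ι] {δ : ℝ} (hδ : 0 < δ) (u : ι → ZMod 2) :
    ∑ v : ι → 𝒴, (∏ i, P (u i) (v i)) *
        (if likelihoodRatio P u v < 2 ^ (Fintype.card ι * (mutualInfo P (1 / 2) - δ)) then 1 else 0)
      ≤ dispersion P / (Fintype.card ι * δ ^ 2) := by
  set C := mutualInfo P (1 / 2)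
  have hcard : (0 : ℝ) < Fintype.card ι := by exact_mod_cast Fintype.card_pos
  have hmean : ∀ i, ∑ y, P (u i) y * (infoDensity P (u i) y - C) = 0 := fun i => by
    simp [mul_sub, sum_sub_distrib, sum_mul_infoDensity hπ hsym, ← sum_mul, hPsum, C]
  have hE : ∀ v : ι → 𝒴, likelihoodRatio P u v < 2 ^ (Fintype.card ι * (C - δ)) →
      (∏ i, P (u i) (v i)) ≠ 0 → Fintype.card ι * δ ≤ |∑ i, (infoDensity P (u i) (v i) - C)| := by
    intro v hlt hne
    rw [likelihoodRatio_eq_rpow hPnonneg (prod_ne_zero_iff.1 hne · (mem_univ _)),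
      Real.rpow_lt_rpow_left_iff one_lt_two] at hlt
    rw [sum_sub_distrib, sum_const, card_univ, nsmul_eq_mul, abs_sub_comm]
    exact le_abs.2 (Or.inl (by linarith))
  calc _ ≤ Fintype.card ι * dispersion P / (Fintype.card ι * δ) ^ 2 :=
        sum_prod_mul_ite_le_of_le_abs (fun i => hPnonneg (u i)) (fun i => hPsum (u i)) hmean
          (fun i => (sum_mul_infoDensity_sub_sq hπ hsym (u i)).le) (by positivity) _ hE
    _ = dispersion P / (Fintype.card ι * δ ^ 2) := by field_simp

lemma sum_prod_mul_ite_le_likelihoodRatio_le (hπ : ∀ y, π (π y) = y)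
    (hsym : ∀ y, P 1 y = P 0 (π y)) (hPnonneg : ∀ x y, 0 ≤ P x y) (hPsum : ∀ x, ∑ y, P x y = 1)
    {A : ℝ} (hA : 0 < A) (u w : ι → ZMod 2) :
    ∑ v : ι → 𝒴, (∏ i, P (u i) (v i)) * (if A ≤ likelihoodRatio P (u + w) v then 1 else 0)
      ≤ min 1 (A⁻¹ * ∏ i, crossRatio P (w i)) := by
  have hμ : ∀ v : ι → 𝒴, 0 ≤ ∏ i, P (u i) (v i) := fun v => prod_nonneg fun i _ => hPnonneg _ _
  refine le_min ?_ ?_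
  · calc _ ≤ ∑ v : ι → 𝒴, ∏ i, P (u i) (v i) :=
          sum_le_sum fun v _ => mul_le_of_le_one_right (hμ v) (by split_ifs <;> norm_num)
      _ = 1 := sum_prod_eq_one fun i => hPsum (u i)
  · have hmarkov : ∀ v : ι → 𝒴, (if A ≤ likelihoodRatio P (u + w) v then (1 : ℝ) else 0) ≤
        A⁻¹ * likelihoodRatio P (u + w) v := by
      intro v
      have hL : 0 ≤ likelihoodRatio P (u + w) v :=
        prod_nonneg fun i _ => div_nonneg (hPnonneg _ _) (outDist_half_nonneg hPnonneg _)
      split_ifs with h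
      · rwa [le_inv_mul_iff₀ hA, mul_one]
      · positivity
    calc _ ≤ ∑ v : ι → 𝒴, (∏ i, P (u i) (v i)) * (A⁻¹ * likelihoodRatio P (u + w) v) :=
          sum_le_sum fun v _ => mul_le_mul_of_nonneg_left (hmarkov v) (hμ v)
      _ = A⁻¹ * ∏ i, crossRatio P (w i) := by
          simp_rw [mul_left_comm _ A⁻¹, ← mul_sum, likelihoodRatio, Pi.add_apply]
          rw [sum_prod_mul_prod (g := fun i y => P (u i + w i) y / outDist P (1 / 2) y)]
          simp_rw [sum_mul_div_outDist_add hπ hsym]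

end BlockChannel

section Decoder

variable {X Y : Type*}

noncomputable def thresholdDecoder [Nonempty X] (S : Set X) (score : X → Y → ℝ) (A : ℝ) (v : Y) :
    X :=
  Classical.epsilon fun c => c ∈ S ∧ A ≤ score c v

lemma thresholdDecoder_eq [Nonempty X] {S : Set X} {score : X → Y → ℝ} {A : ℝ} {u : X} {v : Y}
    (hu : u ∈ S) (hA : A ≤ score u v) (huniq : ∀ c ∈ S, A ≤ score c v → c = u) :
    thresholdDecoder S score A v = u := by
  have h := Classical.epsilon_spec (p := fun c => c ∈ S ∧ A ≤ score c v) ⟨u, hu, hA⟩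
  exact huniq _ h.1 h.2

lemma ite_thresholdDecoder_ne_le [AddCommGroup X] [Fintype X] [DecidableEq X] (S : AddSubgroup X)
    (score : X → Y → ℝ) (A : ℝ) {u : X} (hu : u ∈ S) (v : Y) :
    (if thresholdDecoder S score A v ≠ u then (1 : ℝ) else 0) ≤
      (if score u v < A then 1 else 0) + ∑ w ∈ univ.filter (· ≠ 0),
        (if w ∈ S then 1 else 0) * (if A ≤ score (u + w) v then 1 else 0) := by
  have hsum : 0 ≤ ∑ w ∈ univ.filter (· ≠ 0),
      (if w ∈ S then (1 : ℝ) else 0) * (if A ≤ score (u + w) v then 1 else 0) :=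
    sum_nonneg fun w _ => by split_ifs <;> norm_num
  by_cases hA : score u v < A
  · rw [if_pos hA]
    have : (if thresholdDecoder S score A v ≠ u then (1 : ℝ) else 0) ≤ 1 := by
      split_ifs <;> norm_num
    linarith
  by_cases hψ : thresholdDecoder S score A v = u
  · rw [if_neg (not_not.2 hψ), if_neg hA, zero_add]; exact hsum
  obtain ⟨c, hcS, hcA, hcu⟩ : ∃ c ∈ S, A ≤ score c v ∧ c ≠ u := by
    by_contra! h
    exact hψ (thresholdDecoder_eq hu (not_lt.1 hA) h)
  have hterm :
      (if c - u ∈ S then (1 : ℝ) else 0) * (if A ≤ score (u + (c - u)) v then 1 else 0) = 1 := by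
    rw [if_pos (S.sub_mem hcS hu), add_sub_cancel, if_pos hcA, one_mul]
  have hle := single_le_sum (f := fun w => (if w ∈ S then (1 : ℝ) else 0) *
      (if A ≤ score (u + w) v then 1 else 0)) (fun w _ => by split_ifs <;> norm_num)
    (mem_filter.2 ⟨mem_univ (c - u), sub_ne_zero.2 hcu⟩ : c - u ∈ univ.filter (· ≠ 0))
  rw [if_pos hψ, if_neg hA, zero_add]
  rwa [hterm] at hle

end Decoder

section TypicalDecoder

variable {𝒴 : Type} [Fintype 𝒴] {ι J : Type*} [Fintype ι]

noncomputable def typicalDecoder (P : ZMod 2 → 𝒴 → ℝ) (G : Matrix ι J (ZMod 2)) (δ : ℝ)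
    (v : ι → 𝒴) : ι → ZMod 2 :=
  thresholdDecoder {c | c ᵥ* G = 0} (likelihoodRatio P)
    (2 ^ (Fintype.card ι * (mutualInfo P (1 / 2) - δ))) v

lemma sum_prod_mul_ite_typicalDecoder_ne_le [DecidableEq ι] [Fintype J] {P : ZMod 2 → 𝒴 → ℝ}
    {π : 𝒴 → 𝒴} (hπ : ∀ y, π (π y) = y) (hsym : ∀ y, P 1 y = P 0 (π y))
    (hPnonneg : ∀ x y, 0 ≤ P x y) (hPsum : ∀ x, ∑ y, P x y = 1) [Nonempty ι] {δ : ℝ} (hδ : 0 < δ)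
    (G : Matrix ι J (ZMod 2)) {u : ι → ZMod 2} (hu : u ᵥ* G = 0) :
    ∑ v : ι → 𝒴, (∏ i, P (u i) (v i)) * (if typicalDecoder P G δ v ≠ u then 1 else 0)
      ≤ dispersion P / (Fintype.card ι * δ ^ 2) + ∑ w ∈ univ.filter (· ≠ 0),
        (if w ᵥ* G = 0 then 1 else 0) * min 1
          ((2 ^ (Fintype.card ι * (mutualInfo P (1 / 2) - δ)))⁻¹ * ∏ i, crossRatio P (w i)) := by
  set A : ℝ := 2 ^ (Fintype.card ι * (mutualInfo P (1 / 2) - δ))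
  set S := (LinearMap.ker G.vecMulLinear).toAddSubgroup
  have hS : ∀ c, c ∈ S ↔ c ᵥ* G = 0 := fun c => by simp [S]
  have hψ : typicalDecoder P G δ = thresholdDecoder S (likelihoodRatio P) A := rfl
  have hμ : ∀ v : ι → 𝒴, 0 ≤ ∏ i, P (u i) (v i) := fun v => prod_nonneg fun i _ => hPnonneg _ _
  calc _ ≤ ∑ v : ι → 𝒴, (∏ i, P (u i) (v i)) * ((if likelihoodRatio P u v < A then 1 else 0) +
        ∑ w ∈ univ.filter (· ≠ 0),
          (if w ᵥ* G = 0 then 1 else 0) * (if A ≤ likelihoodRatio P (u + w) v then 1 else 0)) := by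
        refine sum_le_sum fun v _ => mul_le_mul_of_nonneg_left ?_ (hμ v)
        simpa only [hψ, hS] using ite_thresholdDecoder_ne_le S (likelihoodRatio P) A ((hS u).2 hu) v
    _ = ∑ v : ι → 𝒴, (∏ i, P (u i) (v i)) * (if likelihoodRatio P u v < A then 1 else 0) +
        ∑ w ∈ univ.filter (· ≠ 0), (if w ᵥ* G = 0 then 1 else 0) * ∑ v : ι → 𝒴,
          (∏ i, P (u i) (v i)) * (if A ≤ likelihoodRatio P (u + w) v then 1 else 0) := by
        simp_rw [mul_add, sum_add_distrib, mul_sum]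
        rw [sum_comm]
        congr 1
        exact sum_congr rfl fun w _ => sum_congr rfl fun v _ => by ring
    _ ≤ _ := by
        gcongr with w
        · exact sum_prod_mul_ite_likelihoodRatio_lt_le hπ hsym hPnonneg hPsum hδ u
        · exact sum_prod_mul_ite_le_likelihoodRatio_le hπ hsym hPnonneg hPsum (by positivity) u w

end TypicalDecoder

section BlockWeight

def blockWeight {I K R : Type*} [Fintype I] [Fintype K] [Zero R] [DecidableEq R] (w : I × K → R) :
    ℕ :=
  #{i | Function.curry w i ≠ 0}

variable {I K R : Type*} [Fintype I] [DecidableEq I] [Fintype K] [DecidableEq K] [Fintype R]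
  [Zero R] [DecidableEq R]

omit [DecidableEq I] [DecidableEq K] [Fintype R] in
lemma blockWeight_pos {w : I × K → R} (hw : w ≠ 0) : 0 < blockWeight w := by
  obtain ⟨⟨i, a⟩, hia⟩ : ∃ p, w p ≠ 0 := Function.ne_iff.1 hw
  exact card_pos.2 ⟨i, mem_filter.2 ⟨mem_univ i, Function.ne_iff.2 ⟨a, hia⟩⟩⟩

lemma sum_pow_blockWeight (x : ℝ) :
    ∑ w : I × K → R, x ^ blockWeight w = (1 + (Fintype.card (K → R) - 1) * x) ^ Fintype.card I := by
  have hW : ∀ W : I → K → R,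
      x ^ blockWeight ((Equiv.curry I K R).symm W) = ∏ i, if W i ≠ 0 then x else 1 := by
    intro W
    rw [prod_ite, prod_const, prod_const_one, mul_one]
    rfl
  have hblock : ∑ g : K → R, (if g ≠ 0 then x else 1) = 1 + (Fintype.card (K → R) - 1) * x := by
    rw [Fintype.sum_eq_add_sum_compl 0, if_neg (not_not.2 rfl),
      sum_congr rfl fun g hg => if_pos (by simpa using hg), sum_const, card_compl, card_singleton,
      nsmul_eq_mul, Nat.cast_sub Fintype.card_pos, Nat.cast_one]
  rw [← (Equiv.curry I K R).symm.sum_comp, sum_congr rfl fun W _ => hW W,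
    ← Fintype.prod_sum fun _ (g : K → R) => if g ≠ 0 then x else 1, hblock, prod_const, card_univ]

lemma card_filter_blockWeight_lt_le [Nonempty I] (s : ℕ) :
    (#{w : I × K → R | blockWeight w < s} : ℝ) ≤
      (Fintype.card I : ℝ) ^ (s - 1) * Real.exp (Fintype.card (K → R) - 1) := by
  set N : ℝ := (Fintype.card I : ℝ)
  have hN : 1 ≤ N := Nat.one_le_cast.2 Fintype.card_pos
  have hpoint : ∀ w : I × K → R, (if blockWeight w < s then (1 : ℝ) else 0) ≤
      N ^ (s - 1) * N⁻¹ ^ blockWeight w := by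
    intro w
    split_ifs with hw
    · calc (1 : ℝ) = N ^ (s - 1) * N⁻¹ ^ (s - 1) := by
            rw [← mul_pow, mul_inv_cancel₀ (by positivity), one_pow]
        _ ≤ _ := mul_le_mul_of_nonneg_left (pow_le_pow_of_le_one (by positivity)
          (inv_le_one_of_one_le₀ hN) (by omega)) (by positivity)
    · positivity
  have hexp : (1 + (Fintype.card (K → R) - 1) * N⁻¹) ^ Fintype.card I ≤
      Real.exp (Fintype.card (K → R) - 1) := by
    have hM : (1 : ℝ) ≤ Fintype.card (K → R) := Nat.one_le_cast.2 Fintype.card_pos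
    have h := Real.one_sub_div_pow_le_exp_neg (n := Fintype.card I)
      (t := -(Fintype.card (K → R) - 1)) (by linarith [hN])
    rwa [neg_neg, neg_div, sub_neg_eq_add, div_eq_mul_inv] at h
  calc _ = ∑ w : I × K → R, if blockWeight w < s then (1 : ℝ) else 0 := natCast_card_filter _ _
    _ ≤ ∑ w : I × K → R, N ^ (s - 1) * N⁻¹ ^ blockWeight w := sum_le_sum fun w _ => hpoint w
    _ ≤ _ := by
        rw [← mul_sum, sum_pow_blockWeight]
        gcongr

end BlockWeight

section RaSEnsemble

-- `ω c i = some a` puts the unit vector `e_a` in column `c` of block row `i`, and `none` the zero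
-- column; `ω` uniform over `J → I → Option (Fin k)` is the ensemble that is averaged over.
def rasMatrix {I J : Type*} {k : ℕ} (ω : J → I → Option (Fin k)) : Matrix (I × Fin k) J (ZMod 2) :=
  fun r c => if ω c r.1 = some r.2 then 1 else 0

-- A nonzero block of `w` makes the parity `∑ₐ w_a [column = e_a]` of a uniform column of
-- `{0, e_1, …, e_k}` have bias `|E (-1)^parity| ≤ (k - 1)/(k + 1)`.
noncomputable def columnBias (k : ℕ) : ℝ := ((k : ℝ) - 1) / (k + 1)

lemma columnBias_nonneg {k : ℕ} (hk : 0 < k) : 0 ≤ columnBias k :=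
  div_nonneg (sub_nonneg.2 (Nat.one_le_cast.2 hk)) (by positivity)

lemma columnBias_lt_one (k : ℕ) : columnBias k < 1 :=
  (div_lt_one (by positivity)).2 (by linarith)

variable {I J : Type*} [Fintype I] [DecidableEq I] [Fintype J] [DecidableEq J] {k : ℕ}

omit [Fintype I] [DecidableEq I] [Fintype J] [DecidableEq J] in
lemma card_filter_rasMatrix_eq_one_le (ω : J → I → Option (Fin k)) (i : I) (c : J) :
    #{a | rasMatrix ω (i, a) c = 1} ≤ 1 :=
  card_le_one.2 fun a ha b hb => by
    simp only [rasMatrix, mem_filter, ite_eq_left_iff, zero_ne_one, imp_false, not_not] at ha hb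
    exact Option.some_injective _ (ha.2.symm.trans hb.2)

omit [Fintype I] [DecidableEq I] [Fintype J] [DecidableEq J] in
lemma sum_mul_ite_eq_some (o : Option (Fin k)) (g : Fin k → ZMod 2) :
    ∑ a, g a * (if o = some a then 1 else 0) = o.elim 0 g := by
  cases o <;> simp

omit [DecidableEq I] [Fintype J] [DecidableEq J] in
lemma vecMul_rasMatrix (w : I × Fin k → ZMod 2) (ω : J → I → Option (Fin k)) (c : J) :
    (w ᵥ* rasMatrix ω) c = ∑ i, (ω c i).elim 0 fun a => w (i, a) := by
  simp only [Matrix.vecMul, dotProduct, rasMatrix, Fintype.sum_prod_type]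
  exact sum_congr rfl fun i _ => sum_mul_ite_eq_some _ _

omit [DecidableEq I] [Fintype J] [DecidableEq J] in
lemma prod_abs_one_add_sum_parityChar_le (w : I × Fin k → ZMod 2) :
    ∏ i, |1 + ∑ a, parityChar (w (i, a))| ≤
      ((k : ℝ) + 1) ^ Fintype.card I * columnBias k ^ blockWeight w := by
  have hblock : ∀ i, |1 + ∑ a, parityChar (w (i, a))| ≤
      if Function.curry w i ≠ 0 then (k : ℝ) - 1 else k + 1 := by
    intro i
    split_ifs with hi
    · simpa using abs_one_add_sum_parityChar_le hi
    · have hw : ∀ a, w (i, a) = 0 := fun a => congr_fun (not_not.1 hi) a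
      simp [hw, add_comm, abs_of_nonneg (by positivity : (0 : ℝ) ≤ k + 1)]
  calc _ ≤ ∏ i, if Function.curry w i ≠ 0 then (k : ℝ) - 1 else k + 1 :=
        prod_le_prod (fun i _ => abs_nonneg _) fun i _ => hblock i
    _ = ((k : ℝ) + 1) ^ Fintype.card I * columnBias k ^ blockWeight w := by
        rw [prod_ite, prod_const, prod_const, blockWeight, columnBias, div_pow,
          ← card_univ (α := I),
          ← card_filter_add_card_filter_not (s := univ) (fun i => Function.curry w i ≠ 0), pow_add]
        field_simp

omit [Fintype J] [DecidableEq J] in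
lemma card_filter_sum_elim_eq_zero_le (w : I × Fin k → ZMod 2) :
    (#{f : I → Option (Fin k) | ∑ i, (f i).elim 0 (fun a => w (i, a)) = 0} : ℝ) ≤
      ((k : ℝ) + 1) ^ Fintype.card I * ((1 + columnBias k ^ blockWeight w) / 2) := by
  have hcount : (#{f : I → Option (Fin k) | ∑ i, (f i).elim 0 (fun a => w (i, a)) = 0} : ℝ) =
      (((k : ℝ) + 1) ^ Fintype.card I + ∏ i, (1 + ∑ a, parityChar (w (i, a)))) / 2 := by
    rw [natCast_card_filter, sum_congr rfl fun f _ => ite_eq_zero_eq_parityChar _]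
    simp_rw [parityChar_sum]
    rw [← sum_div, sum_add_distrib,
      ← Fintype.prod_sum fun i (o : Option (Fin k)) => parityChar (o.elim 0 fun a => w (i, a))]
    simp [Fintype.sum_option, Fintype.card_option]
  rw [hcount, mul_div_assoc', mul_add, mul_one]
  gcongr
  exact (le_abs_self _).trans ((abs_prod _ _).trans_le (prod_abs_one_add_sum_parityChar_le w))

lemma card_filter_vecMul_rasMatrix_eq_zero_le (w : I × Fin k → ZMod 2) :
    (#{ω : J → I → Option (Fin k) | w ᵥ* rasMatrix ω = 0} : ℝ) ≤
      Fintype.card (J → I → Option (Fin k)) *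
        ((1 + columnBias k ^ blockWeight w) / 2) ^ Fintype.card J := by
  have hfilter : ({ω : J → I → Option (Fin k) | w ᵥ* rasMatrix ω = 0} : Finset _) =
      Fintype.piFinset fun _ => {f | ∑ i, (f i).elim 0 (fun a => w (i, a)) = 0} := by
    ext ω
    simp [Fintype.mem_piFinset, funext_iff, vecMul_rasMatrix]
  rw [hfilter, Fintype.card_piFinset, prod_const, card_univ, Nat.cast_pow, Fintype.card_fun,
    Fintype.card_fun, Fintype.card_option, Fintype.card_fin, Nat.cast_pow, Nat.cast_pow, ← mul_pow]
  gcongr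
  simpa using card_filter_sum_elim_eq_zero_le w

lemma exists_rasMatrix_sum_le (q : (I × Fin k → ZMod 2) → ℝ) (hq : ∀ w, 0 ≤ q w) :
    ∃ ω : J → I → Option (Fin k),
      ∑ w ∈ univ.filter (· ≠ 0), (if w ᵥ* rasMatrix ω = 0 then 1 else 0) * q w ≤
        ∑ w ∈ univ.filter (· ≠ 0),
          ((1 + columnBias k ^ blockWeight w) / 2) ^ Fintype.card J * q w := by
  refine (exists_le_of_sum_le (s := univ) univ_nonempty
    (f := fun ω => ∑ w ∈ univ.filter (· ≠ 0), (if w ᵥ* rasMatrix ω = 0 then 1 else 0) * q w)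
    (g := fun _ => ∑ w ∈ univ.filter (· ≠ 0),
      ((1 + columnBias k ^ blockWeight w) / 2) ^ Fintype.card J * q w) ?_).imp fun ω h => h.2
  rw [sum_comm, sum_const, card_univ, nsmul_eq_mul, mul_sum]
  refine sum_le_sum fun w _ => ?_
  rw [← sum_mul, ← natCast_card_filter, ← mul_assoc]
  exact mul_le_mul_of_nonneg_right (card_filter_vecMul_rasMatrix_eq_zero_le w) (hq w)

omit [DecidableEq I] [Fintype J] [DecidableEq J] in
lemma one_add_pow_blockWeight_pow_mul_min_le (hk : 0 < k) {w : I × Fin k → ZMod 2}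
    (hw : w ≠ 0) {a : ℝ} (ha : 0 ≤ a) (r s : ℕ) :
    ((1 + columnBias k ^ blockWeight w) / 2) ^ r * min 1 a ≤
      (if blockWeight w < s then ((1 + columnBias k) / 2) ^ r else 0) +
        ((1 + columnBias k ^ s) / 2) ^ r * a := by
  set θ := columnBias k
  have hθ0 : 0 ≤ θ := columnBias_nonneg hk
  have hθ1 : θ ≤ 1 := (columnBias_lt_one k).le
  split_ifs with hs
  · have hpow : θ ^ blockWeight w ≤ θ := pow_le_of_le_one hθ0 hθ1 (blockWeight_pos hw).ne'
    calc _ ≤ ((1 + θ) / 2) ^ r * 1 :=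
          mul_le_mul (pow_le_pow_left₀ (by positivity) (by linarith) _) (min_le_left _ _)
            (le_min zero_le_one ha) (by positivity)
      _ ≤ _ := by
          rw [mul_one]
          exact le_add_of_nonneg_right (by positivity)
  · have hpow : θ ^ blockWeight w ≤ θ ^ s := pow_le_pow_of_le_one hθ0 hθ1 (not_lt.1 hs)
    rw [zero_add]
    exact mul_le_mul (pow_le_pow_left₀ (by positivity) (by linarith) _) (min_le_right _ _)
      (le_min zero_le_one ha) (by positivity)

omit [DecidableEq J] in
lemma sum_ne_zero_pow_mul_min_le [Nonempty I] (hk : 0 < k) {g : ZMod 2 → ℝ} (hg0 : ∀ x, 0 ≤ g x)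
    (hg : ∑ x, g x = 2) {A : ℝ} (hA : 0 < A) (s : ℕ) :
    ∑ w ∈ univ.filter (· ≠ 0), ((1 + columnBias k ^ blockWeight w) / 2) ^ Fintype.card J *
        min 1 (A⁻¹ * ∏ i : I × Fin k, g (w i)) ≤
      (Fintype.card I : ℝ) ^ (s - 1) * Real.exp (2 ^ k - 1) *
          ((1 + columnBias k) / 2) ^ Fintype.card J +
        ((1 + columnBias k ^ s) / 2) ^ Fintype.card J * (A⁻¹ * 2 ^ (Fintype.card I * k)) := by
  set θ := columnBias k
  have hθ0 : 0 ≤ θ := columnBias_nonneg hk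
  have hprod : ∀ w : I × Fin k → ZMod 2, 0 ≤ A⁻¹ * ∏ i, g (w i) := fun w =>
    mul_nonneg (inv_nonneg.2 hA.le) (prod_nonneg fun i _ => hg0 _)
  have hsum_prod : ∑ w : I × Fin k → ZMod 2, ∏ i, g (w i) = 2 ^ (Fintype.card I * k) := by
    rw [← Fintype.prod_sum fun (_ : I × Fin k) x => g x, hg, prod_const, card_univ,
      Fintype.card_prod, Fintype.card_fin]
  have hcount := card_filter_blockWeight_lt_le (I := I) (K := Fin k) (R := ZMod 2) s
  simp only [Fintype.card_fun, Fintype.card_fin, ZMod.card, Nat.cast_pow, Nat.cast_ofNat] at hcount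
  calc _ ≤ ∑ w : I × Fin k → ZMod 2,
          ((if blockWeight w < s then ((1 + θ) / 2) ^ Fintype.card J else 0) +
            ((1 + θ ^ s) / 2) ^ Fintype.card J * (A⁻¹ * ∏ i, g (w i))) := by
        refine (sum_le_sum fun w hw => one_add_pow_blockWeight_pow_mul_min_le hk
          (mem_filter.1 hw).2 (hprod w) _ s).trans ?_
        refine sum_le_sum_of_subset_of_nonneg (filter_subset _ _) fun w _ _ => ?_
        have := hprod w
        split_ifs <;> positivity
    _ = ((1 + θ) / 2) ^ Fintype.card J * #{w : I × Fin k → ZMod 2 | blockWeight w < s} +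
          ((1 + θ ^ s) / 2) ^ Fintype.card J * (A⁻¹ * 2 ^ (Fintype.card I * k)) := by
        rw [sum_add_distrib, ← mul_sum, ← mul_sum, hsum_prod, natCast_card_filter, mul_sum]
        simp_rw [mul_ite, mul_one, mul_zero]
    _ ≤ _ := by
        rw [mul_comm (_ ^ (s - 1) * _)]
        gcongr

end RaSEnsemble

-- Transmitted word below the threshold; codewords of block weight `< s`; the remaining codewords.
noncomputable def rasErrorBound (V δ θ ν x : ℝ) (k r s N : ℕ) : ℝ :=
  V / (N * k * δ ^ 2) + (N : ℝ) ^ (s - 1) * Real.exp (2 ^ k - 1) * ((1 + θ) / 2) ^ (N * r) +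
    ((1 + ν) / 2) ^ (N * r) * 2 ^ ((N : ℝ) * k * x)

theorem exists_rasMatrix_error_le {𝒴 : Type} [Fintype 𝒴] {P : ZMod 2 → 𝒴 → ℝ} {π : 𝒴 → 𝒴}
    (hπ : ∀ y, π (π y) = y) (hsym : ∀ y, P 1 y = P 0 (π y)) (hPnonneg : ∀ x y, 0 ≤ P x y)
    (hPsum : ∀ x, ∑ y, P x y = 1) {I J : Type*} [Fintype I] [DecidableEq I] [Nonempty I]
    [Fintype J] [DecidableEq J] {k r : ℕ} (hk : 0 < k) (hJ : Fintype.card J = Fintype.card I * r)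
    {δ : ℝ} (hδ : 0 < δ) (s : ℕ) :
    ∃ ω : J → I → Option (Fin k), ∀ u : I × Fin k → ZMod 2, u ᵥ* rasMatrix ω = 0 →
      ∑ v : I × Fin k → 𝒴, (∏ i, P (u i) (v i)) *
          (if typicalDecoder P (rasMatrix ω) δ v ≠ u then 1 else 0) ≤
        rasErrorBound (dispersion P) δ (columnBias k) (columnBias k ^ s)
          (1 - mutualInfo P (1 / 2) + δ) k r s (Fintype.card I) := by
  have : Nonempty (I × Fin k) := ⟨(Classical.arbitrary I, ⟨0, hk⟩)⟩
  set A : ℝ := 2 ^ (Fintype.card (I × Fin k) * (mutualInfo P (1 / 2) - δ))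
  have hA : 0 < A := by positivity
  have hA2 : A⁻¹ * 2 ^ (Fintype.card I * k) =
      2 ^ (Fintype.card I * k * (1 - mutualInfo P (1 / 2) + δ) : ℝ) := by
    rw [← Real.rpow_natCast, ← Real.rpow_neg zero_le_two, ← Real.rpow_add two_pos]
    push_cast [Fintype.card_prod, Fintype.card_fin]
    ring_nf
  obtain ⟨ω, hω⟩ := exists_rasMatrix_sum_le (J := J)
    (fun w : I × Fin k → ZMod 2 => min 1 (A⁻¹ * ∏ i, crossRatio P (w i)))
    fun w => le_min zero_le_one
      (mul_nonneg (inv_nonneg.2 hA.le) (prod_nonneg fun i _ => crossRatio_nonneg hPnonneg _))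
  refine ⟨ω, fun u hu => ?_⟩
  calc _ ≤ _ := sum_prod_mul_ite_typicalDecoder_ne_le hπ hsym hPnonneg hPsum hδ _ hu
    _ ≤ _ := add_le_add le_rfl (hω.trans (sum_ne_zero_pow_mul_min_le hk (crossRatio_nonneg hPnonneg)
          (sum_crossRatio hPnonneg hPsum) hA s))
    _ = _ := by
        rw [hA2, rasErrorBound, hJ, ← add_assoc]
        push_cast [Fintype.card_prod, Fintype.card_fin]
        ring

lemma tendsto_rasErrorBound {V δ θ ν x : ℝ} {k r s : ℕ} (hk : 0 < k) (hδ : 0 < δ) (hθ0 : 0 ≤ θ)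
    (hθ1 : θ < 1) (hr : 0 < r) (hν : 0 ≤ ν) (hζ : ((1 + ν) / 2) ^ r * 2 ^ (k * x) < 1) :
    Tendsto (fun m => rasErrorBound V δ θ ν x k r s (m + 1)) atTop (𝓝 0) := by
  have hm : Tendsto (fun m : ℕ => ((m + 1 : ℕ) : ℝ)) atTop atTop :=
    tendsto_natCast_atTop_atTop.comp (tendsto_add_atTop_nat 1)
  have h1 : Tendsto (fun m : ℕ => V / ((m + 1 : ℕ) * k * δ ^ 2)) atTop (𝓝 0) :=
    tendsto_const_nhds.div_atTop
      ((hm.atTop_mul_const (by positivity)).atTop_mul_const (by positivity))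
  have hρ : ((1 + θ) / 2) ^ r < 1 := pow_lt_one₀ (by positivity) (by linarith) hr.ne'
  have h2 : Tendsto (fun m : ℕ => ((m + 1 : ℕ) : ℝ) ^ (s - 1) * Real.exp (2 ^ k - 1) *
      ((1 + θ) / 2) ^ ((m + 1) * r)) atTop (𝓝 0) := by
    have h := ((tendsto_add_atTop_iff_nat 1).2 (tendsto_pow_const_mul_const_pow_of_lt_one (s - 1)
      (by positivity) hρ)).const_mul (Real.exp (2 ^ k - 1))
    rw [mul_zero] at h
    refine h.congr fun m => ?_
    rw [← pow_mul, mul_comm r]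
    ring
  have h3 : Tendsto (fun m : ℕ => ((1 + ν) / 2) ^ ((m + 1) * r) * 2 ^ (((m + 1 : ℕ) : ℝ) * k * x))
      atTop (𝓝 0) := by
    refine ((tendsto_add_atTop_iff_nat 1).2
      (tendsto_pow_atTop_nhds_zero_of_lt_one (by positivity) hζ)).congr fun m => ?_
    rw [mul_pow, ← pow_mul, mul_comm r, ← Real.rpow_natCast (2 ^ _), ← Real.rpow_mul zero_le_two]
    ring_nf
  simpa [rasErrorBound] using (h1.add h2).add h3

lemma exists_pos_mul_one_sub_add_lt {k n : ℕ} {C : ℝ} (hk : 0 < k) (hkn : k ≤ n)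
    (hrate : (2 * (k : ℝ) - n) / k < C) : ∃ δ > 0, (k : ℝ) * (1 - C + δ) < (n - k : ℕ) := by
  have hk' : (0 : ℝ) < k := by exact_mod_cast hk
  rw [div_lt_iff₀ hk'] at hrate
  refine ⟨(C - (2 * k - n) / k) / 2, by rw [sub_div' hk'.ne']; positivity, ?_⟩
  rw [Nat.cast_sub hkn]
  field_simp
  linarith

lemma exists_one_add_pow_div_two_pow_mul_lt_one {θ c : ℝ} {r : ℕ} (hθ0 : 0 ≤ θ) (hθ1 : θ < 1)
    (hc : c < 2 ^ r) : ∃ s : ℕ, ((1 + θ ^ s) / 2) ^ r * c < 1 := by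
  have h : Tendsto (fun s : ℕ => ((1 + θ ^ s) / 2) ^ r * c) atTop (𝓝 (((1 + 0) / 2) ^ r * c)) :=
    ((((tendsto_pow_atTop_nhds_zero_of_lt_one hθ0 hθ1).const_add 1).div_const 2).pow r).mul_const c
  have hlim : ((1 + 0) / 2 : ℝ) ^ r * c < 1 := by
    rwa [add_zero, div_pow, one_pow, one_div_mul_eq_div, div_lt_one (by positivity)]
  exact (h.eventually_lt_const hlim).exists

lemma card_sub_card_le_finrank_ker_vecMulLinear {K ι J : Type*} [Field K] [Fintype ι] [Fintype J]
    (G : Matrix ι J K) :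
    Fintype.card ι - Fintype.card J ≤ Module.finrank K (LinearMap.ker G.vecMulLinear) := by
  have hrank := LinearMap.finrank_range_add_finrank_ker G.vecMulLinear
  have hrange := (LinearMap.range G.vecMulLinear).finrank_le
  rw [Module.finrank_fintype_fun_eq_card] at hrank hrange
  omega

lemma sum_inv_card_mul_mul_le {α β : Type*} [Fintype β] {S : Finset α} (hS : S.Nonempty)
    (f g : α → β → ℝ) {b : ℝ} (h : ∀ u ∈ S, ∑ v, f u v * g u v ≤ b) :
    ∑ u ∈ S, ∑ v, (#S : ℝ)⁻¹ * f u v * g u v ≤ b := by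
  calc ∑ u ∈ S, ∑ v, (#S : ℝ)⁻¹ * f u v * g u v = ∑ u ∈ S, (#S : ℝ)⁻¹ * ∑ v, f u v * g u v := by
        simp_rw [mul_sum, mul_assoc]
    _ ≤ ∑ _u ∈ S, (#S : ℝ)⁻¹ * b := sum_le_sum fun u hu => by gcongr; exact h u hu
    _ = b := by
        rw [sum_const, nsmul_eq_mul, ← mul_assoc, mul_inv_cancel₀ (by simpa using hS.ne_empty),
          one_mul]

theorem RaS_parity_check_coding_theorem_general
    (𝒴 : Type) [Fintype 𝒴]
    (P : ZMod 2 → 𝒴 → ℝ) (π : 𝒴 → 𝒴)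
    (hPnonneg : ∀ x y, 0 ≤ P x y) (hPsum : ∀ x, ∑ y : 𝒴, P x y = 1)
    (hπ : ∀ y, π (π y) = y) (hsym : ∀ y, P 1 y = P 0 (π y))
    (k n : ℕ) (hk : 0 < k) (hkn : k < n)
    (hrate : (2 * (k : ℝ) - n) / k < mutualInfo P (1 / 2))
    (ε : ℝ) (hε : 0 < ε) :
    ∃ m₀ : ℕ, ∀ m ≥ m₀,
      ∃ (G : Matrix (Fin (m + 1) × Fin k) (Fin (m + 1) × Fin (n - k)) (ZMod 2))
        (ψ : ((Fin (m + 1) × Fin k) → 𝒴) → ((Fin (m + 1) × Fin k) → ZMod 2)),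
        -- G lies in the support of the RaS ensemble
        (∀ (i j : Fin (m + 1)) (b : Fin (n - k)),
          (Finset.univ.filter (fun a : Fin k => G (i, a) (j, b) = 1)).card ≤ 1) ∧
        -- the parity-check code 𝒞 = {u : u·G = 0} has dimension ≥ (2k−n)(m+1)
        (2 * k - n) * (m + 1) ≤
          Module.finrank (ZMod 2) (LinearMap.ker (Matrix.vecMulLinear G)) ∧
        -- error probability at most ε for U uniform on 𝒞 and V the channel output
        (∑ u ∈ Finset.univ.filter
            (fun u : (Fin (m + 1) × Fin k) → ZMod 2 => Matrix.vecMul u G = 0),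
          ∑ v : (Fin (m + 1) × Fin k) → 𝒴,
            (((Finset.univ.filter
                (fun u : (Fin (m + 1) × Fin k) → ZMod 2 =>
                  Matrix.vecMul u G = 0)).card : ℝ)⁻¹ *
              (∏ i, P (u i) (v i)) *
              (if ψ v ≠ u then 1 else 0))) ≤ ε := by
  obtain ⟨δ, hδ, hgap⟩ := exists_pos_mul_one_sub_add_lt hk hkn.le hrate
  have hθ0 := columnBias_nonneg hk
  obtain ⟨s, hs⟩ := exists_one_add_pow_div_two_pow_mul_lt_one hθ0 (columnBias_lt_one k)
    (c := 2 ^ ((k : ℝ) * (1 - mutualInfo P (1 / 2) + δ))) (r := n - k)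
    (by rwa [← Real.rpow_natCast, Real.rpow_lt_rpow_left_iff one_lt_two])
  obtain ⟨m₀, hm₀⟩ := eventually_atTop.1 ((tendsto_rasErrorBound (V := dispersion P) (s := s)
    hk hδ hθ0 (columnBias_lt_one k) (Nat.sub_pos_of_lt hkn) (pow_nonneg hθ0 s) hs
    ).eventually_lt_const hε)
  refine ⟨m₀, fun m hm => ?_⟩
  obtain ⟨ω, hω⟩ := exists_rasMatrix_error_le (I := Fin (m + 1)) (J := Fin (m + 1) × Fin (n - k))
    (r := n - k) hπ hsym hPnonneg hPsum hk (by simp) hδ s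
  refine ⟨rasMatrix ω, typicalDecoder P (rasMatrix ω) δ,
    fun i j b => card_filter_rasMatrix_eq_one_le ω i (j, b), ?_, ?_⟩
  · refine le_trans (le_of_eq ?_) (card_sub_card_le_finrank_ker_vecMulLinear (rasMatrix ω))
    simp only [Fintype.card_prod, Fintype.card_fin]
    rw [← Nat.mul_sub, mul_comm]
    congr 1
    omega
  · refine sum_inv_card_mul_mul_le ⟨0, by simp⟩ _ _ fun u hu =>
      (hω u (mem_filter.1 hu).2).trans ?_
    simpa only [Fintype.card_fin] using (hm₀ m hm).le

/-- **The parity-check code ensemble associated with the RaS ensemble achieves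
capacity.** If `k < n < 2k` and `(2k−n)/k < C` with `C = I(1/2)` the capacity of the
BIOS channel, then for every `ε > 0` there is `m₀` such that for all `m ≥ m₀` some
matrix `G` in the support of the RaS ensemble yields a parity-check code
`𝒞 = {u : u·G = 0}` of dimension at least `(2k−n)(m+1)`, and some decoder `ψ`
achieves `Pr{ψ(V) ≠ U} ≤ ε` for `U` uniform on `𝒞` and `V` the channel output with
input `U`. -/
theorem RaS_parity_check_coding_theorem
    (𝒴 : Type) [Fintype 𝒴]
    (P : ZMod 2 → 𝒴 → ℝ) (π : 𝒴 → 𝒴)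
    (hPnonneg : ∀ x y, 0 ≤ P x y) (hPsum : ∀ x, ∑ y : 𝒴, P x y = 1)
    (hπ : ∀ y, π (π y) = y) (hsym : ∀ y, P 1 y = P 0 (π y))
    (k n : ℕ) (hk : 0 < k) (hkn : k < n) (hn2k : n < 2 * k)
    (hrate : (2 * (k : ℝ) - n) / k < mutualInfo P (1 / 2))
    (ε : ℝ) (hε : 0 < ε) :
    ∃ m₀ : ℕ, ∀ m ≥ m₀,
      ∃ (G : Matrix (Fin (m + 1) × Fin k) (Fin (m + 1) × Fin (n - k)) (ZMod 2))
        (ψ : ((Fin (m + 1) × Fin k) → 𝒴) → ((Fin (m + 1) × Fin k) → ZMod 2)),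
        -- G lies in the support of the RaS ensemble
        (∀ (i j : Fin (m + 1)) (b : Fin (n - k)),
          (Finset.univ.filter (fun a : Fin k => G (i, a) (j, b) = 1)).card ≤ 1) ∧
        -- the parity-check code 𝒞 = {u : u·G = 0} has dimension ≥ (2k−n)(m+1)
        (2 * k - n) * (m + 1) ≤
          Module.finrank (ZMod 2) (LinearMap.ker (Matrix.vecMulLinear G)) ∧
        -- error probability at most ε for U uniform on 𝒞 and V the channel output
        (∑ u ∈ Finset.univ.filter
            (fun u : (Fin (m + 1) × Fin k) → ZMod 2 => Matrix.vecMul u G = 0),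
          ∑ v : (Fin (m + 1) × Fin k) → 𝒴,
            (((Finset.univ.filter
                (fun u : (Fin (m + 1) × Fin k) → ZMod 2 =>
                  Matrix.vecMul u G = 0)).card : ℝ)⁻¹ *
              (∏ i, P (u i) (v i)) *
              (if ψ v ≠ u then 1 else 0))) ≤ ε :=
  RaS_parity_check_coding_theorem_general 𝒴 P π hPnonneg hPsum hπ hsym k n hk hkn hrate ε hε
end

section
/- The partial mutual information I_0 : [0,1] → ℝ is continuous on [0,1], differentiable on (0,1), and monotonically nondecreasing on [0,1], with I_0(0) = 0. -/
/-!
Wherever every `P_p(y)` is positive, `I₀` is differentiable with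
`I₀'(p) = -(1 / ln 2) · Σ_y P(y|0) (P(y|1) - P(y|0)) / P_p(y)`. Since
`p (P(y|1) - P(y|0)) = P_p(y) - P(y|0)`, for `p > 0` this sum equals
`(1 - Σ_y P(y|0)² / P_p(y)) / p`, and `Σ_y P(y|0)² / P_p(y) ≥ 1` by Cauchy–Schwarz
(Sedrakyan's lemma). Hence `I₀' ≥ 0` on `(0,1)` and the mean value theorem gives monotonicity.
-/

open Finset

section

variable {𝒴 : Type} [Fintype 𝒴] {P : ZMod 2 → 𝒴 → ℝ}

lemma outDist_pos (hP : ∀ x y, 0 < P x y) {p : ℝ} (hp : p ∈ Set.Icc (0 : ℝ) 1) (y : 𝒴) :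
    0 < outDist P p y := by
  obtain ⟨hp0, hp1⟩ := hp
  unfold outDist
  rcases hp1.lt_or_eq with hp1 | rfl
  · exact add_pos_of_pos_of_nonneg (mul_pos (sub_pos.2 hp1) (hP 0 y)) (mul_nonneg hp0 (hP 1 y).le)
  · simpa using hP 1 y

lemma sum_outDist (hP : ∀ x, ∑ y : 𝒴, P x y = 1) (p : ℝ) : ∑ y : 𝒴, outDist P p y = 1 := by
  simp only [outDist, sum_add_distrib, ← mul_sum, hP]
  ring

lemma hasDerivAt_outDist (p : ℝ) (y : 𝒴) :
    HasDerivAt (fun p ↦ outDist P p y) (P 1 y - P 0 y) p := by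
  have affine : (fun p ↦ outDist P p y) = fun p ↦ P 0 y + p * (P 1 y - P 0 y) := by
    funext p
    simp only [outDist]
    ring
  rw [affine]
  simpa using ((hasDerivAt_id' p).mul_const (P 1 y - P 0 y)).const_add (P 0 y)

lemma partialMI0_zero (hP : ∀ y, P 0 y ≠ 0) : partialMI0 P 0 = 0 := by
  simp [partialMI0, outDist, div_self (hP _)]

lemma hasDerivAt_partialMI0 (hP : ∀ y, P 0 y ≠ 0) {p : ℝ} (hp : ∀ y, outDist P p y ≠ 0) :
    HasDerivAt (partialMI0 P)
      (-(∑ y : 𝒴, P 0 y * (P 1 y - P 0 y) / outDist P p y) / Real.log 2) p := by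
  unfold partialMI0 Real.logb
  rw [← sum_neg_distrib, sum_div]
  refine HasDerivAt.fun_sum fun y _ ↦ ?_
  refine ((((hasDerivAt_const p (P 0 y)).fun_div (hasDerivAt_outDist p y) (hp y)).log
    (div_ne_zero (hP y) (hp y))).div_const (Real.log 2)).const_mul (P 0 y) |>.congr_deriv ?_
  have := hP y
  have := hp y
  field_simp
  ring

lemma one_le_sum_sq_div_outDist (hP : ∀ x y, 0 < P x y) (hPsum : ∀ x, ∑ y : 𝒴, P x y = 1)
    {p : ℝ} (hp : p ∈ Set.Icc (0 : ℝ) 1) : 1 ≤ ∑ y : 𝒴, P 0 y ^ 2 / outDist P p y := by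
  simpa [hPsum, sum_outDist hPsum] using
    sq_sum_div_le_sum_sq_div univ (P 0) fun y _ ↦ outDist_pos hP hp y

lemma sum_mul_sub_div_outDist_nonpos (hP : ∀ x y, 0 < P x y)
    (hPsum : ∀ x, ∑ y : 𝒴, P x y = 1) {p : ℝ} (hp : p ∈ Set.Ioc (0 : ℝ) 1) :
    ∑ y : 𝒴, P 0 y * (P 1 y - P 0 y) / outDist P p y ≤ 0 := by
  have hp' : p ∈ Set.Icc (0 : ℝ) 1 := Set.Ioc_subset_Icc_self hp
  have scaled : p * ∑ y : 𝒴, P 0 y * (P 1 y - P 0 y) / outDist P p y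
      = 1 - ∑ y : 𝒴, P 0 y ^ 2 / outDist P p y := by
    rw [mul_sum, ← hPsum 0, ← sum_sub_distrib]
    refine sum_congr rfl fun y _ ↦ ?_
    have := (outDist_pos hP hp' y).ne'
    field_simp
    simp only [outDist]
    ring
  have chi_sq := one_le_sum_sq_div_outDist hP hPsum hp'
  exact nonpos_of_mul_nonpos_right (by linarith) hp.1

end

/-- The partial mutual information `I_0 : [0,1] → ℝ` is continuous on `[0,1]`,
differentiable on `(0,1)`, and monotonically nondecreasing on `[0,1]`, with
`I_0(0) = 0`. -/
theorem partialMI0_props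
    (𝒴 : Type) [Fintype 𝒴]
    (P : ZMod 2 → 𝒴 → ℝ)
    (hPpos : ∀ x y, 0 < P x y) (hPsum : ∀ x, ∑ y : 𝒴, P x y = 1) :
    ContinuousOn (partialMI0 P) (Set.Icc (0 : ℝ) 1) ∧
    DifferentiableOn ℝ (partialMI0 P) (Set.Ioo (0 : ℝ) 1) ∧
    MonotoneOn (partialMI0 P) (Set.Icc (0 : ℝ) 1) ∧
    partialMI0 P 0 = 0 := by
  have hP0 : ∀ y, P 0 y ≠ 0 := fun y ↦ (hPpos 0 y).ne'
  have hderiv : ∀ p ∈ Set.Icc (0 : ℝ) 1, HasDerivAt (partialMI0 P)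
      (-(∑ y : 𝒴, P 0 y * (P 1 y - P 0 y) / outDist P p y) / Real.log 2) p :=
    fun p hp ↦ hasDerivAt_partialMI0 hP0 fun y ↦ (outDist_pos hPpos hp y).ne'
  have hcont : ContinuousOn (partialMI0 P) (Set.Icc (0 : ℝ) 1) :=
    fun p hp ↦ (hderiv p hp).continuousAt.continuousWithinAt
  have hdiff : DifferentiableOn ℝ (partialMI0 P) (Set.Ioo (0 : ℝ) 1) :=
    fun p hp ↦ (hderiv p (Set.Ioo_subset_Icc_self hp)).differentiableAt.differentiableWithinAt
  refine ⟨hcont, hdiff, ?_, partialMI0_zero hP0⟩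
  refine monotoneOn_of_deriv_nonneg (convex_Icc 0 1) hcont (by rwa [interior_Icc]) fun p hp ↦ ?_
  rw [interior_Icc] at hp
  rw [(hderiv p (Set.Ioo_subset_Icc_self hp)).deriv]
  exact div_nonneg
    (neg_nonneg.2 (sum_mul_sub_div_outDist_nonpos hPpos hPsum (Set.Ioo_subset_Ioc_self hp)))
    (Real.log_nonneg one_le_two)
end

section
/- Let T ≥ 1 and let u ∈ F₂^{(m+1)k} have at least T nonzero sub-blocks, and let G be a random matrix from the RaS ensemble. Then for every fixed x ∈ F₂^{(m+1)(n−k)}, the conditional probability satisfies Pr{u·G = x} ≤ [1/2 + (1/2)·((k−1)/(k+1))^T]^{(m+1)(n−k)}. -/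
open Finset

noncomputable def chi (s : ZMod 2) : ℝ := if s = 0 then 1 else -1

lemma zmod2_cases (s : ZMod 2) : s = 0 ∨ s = 1 := by revert s; decide


lemma chi_add (a b : ZMod 2) : chi (a + b) = chi a * chi b := by
  have h : (1:ZMod 2) + 1 = 0 := by decide
  rcases zmod2_cases a with ha | ha <;> rcases zmod2_cases b with hb | hb <;>
    subst ha <;> subst hb <;> simp [chi, h]

lemma ind_eq_chi (a b : ZMod 2) :
    (if a = b then (1:ℝ) else 0) = 1/2 + (chi a * chi b) / 2 := by
  rcases zmod2_cases a with ha | ha <;> rcases zmod2_cases b with hb | hb <;>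
    subst ha <;> subst hb <;> norm_num [chi]

lemma chi_sum {ι : Type*} (s : Finset ι) (f : ι → ZMod 2) :
    chi (∑ i ∈ s, f i) = ∏ i ∈ s, chi (f i) := by
  classical
  induction s using Finset.cons_induction with
  | empty => simp [chi]
  | cons a s ha ih => rw [Finset.sum_cons, Finset.prod_cons, chi_add, ih]

lemma chi_abs (a : ZMod 2) : |chi a| = 1 := by
  rcases zmod2_cases a with ha | ha <;> subst ha <;> norm_num [chi]

noncomputable def wgt (k : ℕ) (v : Fin k → ZMod 2) : ℝ :=
  if (Finset.univ.filter (fun a => v a = 1)).card ≤ 1 then ((k:ℝ)+1)⁻¹ else 0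

def ebasis (k : ℕ) (a : Fin k) : Fin k → ZMod 2 := fun b => if b = a then 1 else 0

def ovec (k : ℕ) : Option (Fin k) → (Fin k → ZMod 2)
  | none => 0
  | some a => ebasis k a

lemma ovec_card (k : ℕ) (o : Option (Fin k)) :
    (Finset.univ.filter (fun a => ovec k o a = 1)).card ≤ 1 := by
  cases o with
  | none =>
    have : (Finset.univ.filter (fun a : Fin k => ovec k none a = 1)) = ∅ := by
      apply Finset.filter_eq_empty_iff.2
      intro a _
      simp [ovec]
    simp [this]
  | some a =>
    have : (Finset.univ.filter (fun b : Fin k => ovec k (some a) b = 1)) = {a} := by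
      ext b
      simp only [Finset.mem_filter, Finset.mem_univ, true_and, Finset.mem_singleton,
        ovec, ebasis]
      constructor
      · intro h; by_contra hb; simp [hb] at h
      · intro h; simp [h]
    simp [this]

lemma ovec_inj (k : ℕ) : Function.Injective (ovec k) := by
  intro o1 o2 h
  cases o1 with
  | none =>
    cases o2 with
    | none => rfl
    | some a => exfalso; have := congrFun h a; simp [ovec, ebasis] at this
  | some a =>
    cases o2 with
    | none => exfalso; have := congrFun h a; simp [ovec, ebasis] at this
    | some b =>
      have := congrFun h a
      simp only [ovec, ebasis, if_pos rfl] at this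
      by_cases hab : a = b
      · rw [hab]
      · exfalso; rw [if_neg hab] at this; exact one_ne_zero this

lemma ovec_surj (k : ℕ) (v : Fin k → ZMod 2)
    (hv : (Finset.univ.filter (fun a => v a = 1)).card ≤ 1) : ∃ o, ovec k o = v := by
  set s := Finset.univ.filter (fun a => v a = 1) with hs
  interval_cases h : s.card
  · refine ⟨none, funext fun a => ?_⟩
    have ha : a ∉ s := by rw [Finset.card_eq_zero.1 h]; exact Finset.notMem_empty a
    rw [hs] at ha
    simp only [Finset.mem_filter, Finset.mem_univ, true_and] at ha
    rcases zmod2_cases (v a) with h0 | h1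
    · simp [ovec, h0]
    · exact absurd h1 ha
  · obtain ⟨a, ha⟩ := Finset.card_eq_one.1 h
    refine ⟨some a, funext fun b => ?_⟩
    by_cases hb : b = a
    · subst hb
      have : b ∈ s := by rw [ha]; exact Finset.mem_singleton_self b
      simp only [hs, Finset.mem_filter] at this
      simp [ovec, ebasis, this.2]
    · have : b ∉ s := by rw [ha]; simp [hb]
      simp only [hs, Finset.mem_filter, Finset.mem_univ, true_and] at this
      rcases zmod2_cases (v b) with h0 | h1
      · simp [ovec, ebasis, hb, h0]
      · exact absurd h1 this

lemma sum_wgt_mul (k : ℕ) (F : (Fin k → ZMod 2) → ℝ) :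
    ∑ v : Fin k → ZMod 2, wgt k v * F v
      = ((k:ℝ)+1)⁻¹ * (F 0 + ∑ a : Fin k, F (ebasis k a)) := by
  classical
  have h1 : ∑ v : Fin k → ZMod 2, wgt k v * F v
      = ∑ v ∈ Finset.univ.filter
          (fun v : Fin k → ZMod 2 => (Finset.univ.filter (fun a => v a = 1)).card ≤ 1),
          wgt k v * F v := by
    refine (Finset.sum_filter_of_ne fun v _ hne => ?_).symm
    by_contra hc
    exact hne (by simp [wgt, hc])
  have h2 : ∑ v ∈ Finset.univ.filter
          (fun v : Fin k → ZMod 2 => (Finset.univ.filter (fun a => v a = 1)).card ≤ 1),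
          wgt k v * F v
      = ∑ v ∈ Finset.univ.filter
          (fun v : Fin k → ZMod 2 => (Finset.univ.filter (fun a => v a = 1)).card ≤ 1),
          ((k:ℝ)+1)⁻¹ * F v := by
    refine Finset.sum_congr rfl fun v hv => ?_
    rw [Finset.mem_filter] at hv
    rw [wgt, if_pos hv.2]
  have h3 : ∑ v ∈ Finset.univ.filter
          (fun v : Fin k → ZMod 2 => (Finset.univ.filter (fun a => v a = 1)).card ≤ 1),
          F v = ∑ o : Option (Fin k), F (ovec k o) := by
    refine (Finset.sum_bij (fun o _ => ovec k o) ?_ ?_ ?_ ?_).symm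
    · intro o _; simp only [Finset.mem_filter, Finset.mem_univ, true_and]; exact ovec_card k o
    · intro o1 _ o2 _ h; exact ovec_inj k h
    · intro v hv
      rw [Finset.mem_filter] at hv
      obtain ⟨o, ho⟩ := ovec_surj k v hv.2
      exact ⟨o, Finset.mem_univ o, ho⟩
    · intro o _; rfl
  rw [h1, h2, ← Finset.mul_sum, h3, Fintype.sum_option]
  rfl

lemma chi_one : chi 1 = -1 := by norm_num [chi]
lemma chi_zero' : chi 0 = 1 := by norm_num [chi]

lemma sum_wgt (k : ℕ) : ∑ v : Fin k → ZMod 2, wgt k v = 1 := by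
  have := sum_wgt_mul k (fun _ => 1)
  simp only [mul_one] at this
  rw [this, Finset.sum_const, Finset.card_univ, Fintype.card_fin]
  simp only [nsmul_eq_mul, mul_one]
  rw [show (1:ℝ) + (k:ℝ) = (k:ℝ)+1 by ring]
  field_simp

noncomputable def blockB (k : ℕ) (uu : Fin k → ZMod 2) : ℝ :=
  ∑ v : Fin k → ZMod 2, wgt k v * chi (∑ a, uu a * v a)

lemma blockB_eq (k : ℕ) (uu : Fin k → ZMod 2) :
    blockB k uu = ((k:ℝ)+1)⁻¹ *
      ((k:ℝ) + 1 - 2 * ((Finset.univ.filter (fun a => uu a ≠ 0)).card : ℝ)) := by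
  classical
  rw [blockB, sum_wgt_mul]
  have h0 : chi (∑ a, uu a * (0 : Fin k → ZMod 2) a) = 1 := by
    simp [chi_zero']
  have he : ∀ a : Fin k, (∑ b, uu b * ebasis k a b) = uu a := by
    intro a
    simp [ebasis, mul_ite, mul_one, mul_zero]
  have hsum : ∑ a : Fin k, chi (∑ b, uu b * ebasis k a b) = ∑ a : Fin k, chi (uu a) := by
    refine Finset.sum_congr rfl fun a _ => ?_
    rw [he a]
  set W := (Finset.univ.filter (fun a => uu a ≠ 0)).card with hW
  have hchisum : ∑ a : Fin k, chi (uu a) = (k:ℝ) - 2 * W := by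
    rw [← Finset.sum_filter_add_sum_filter_not Finset.univ (fun a => uu a ≠ 0)]
    have e1 : ∑ a ∈ Finset.univ.filter (fun a => uu a ≠ 0), chi (uu a) = -(W:ℝ) := by
      have hcong : ∀ a ∈ Finset.univ.filter (fun a => uu a ≠ 0), chi (uu a) = -1 := by
        intro a ha
        rw [Finset.mem_filter] at ha
        rcases zmod2_cases (uu a) with h | h
        · exact absurd h ha.2
        · rw [h]; exact chi_one
      rw [Finset.sum_congr rfl hcong, Finset.sum_const, hW]
      simp [nsmul_eq_mul]
    have e2 : ∑ a ∈ Finset.univ.filter (fun a => ¬ uu a ≠ 0), chi (uu a)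
        = ((Finset.univ.filter (fun a : Fin k => ¬ uu a ≠ 0)).card : ℝ) := by
      have hcong : ∀ a ∈ Finset.univ.filter (fun a => ¬ uu a ≠ 0), chi (uu a) = 1 := by
        intro a ha
        rw [Finset.mem_filter, not_not] at ha
        rw [ha.2]; exact chi_zero'
      rw [Finset.sum_congr rfl hcong, Finset.sum_const]
      simp
    have e3 : (Finset.univ.filter (fun a : Fin k => ¬ uu a ≠ 0)).card = k - W := by
      have := Finset.card_filter_add_card_filter_not
        (s := (Finset.univ : Finset (Fin k))) (p := fun a => uu a ≠ 0)
      rw [Finset.card_univ, Fintype.card_fin] at this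
      omega
    have hWle : W ≤ k := by
      have := Finset.card_filter_le (Finset.univ : Finset (Fin k)) (fun a => uu a ≠ 0)
      rwa [Finset.card_univ, Fintype.card_fin] at this
    rw [e1, e2, e3]
    push_cast [hWle]
    ring
  rw [h0, hsum, hchisum]
  ring

lemma blockB_abs_le_one (k : ℕ) (uu : Fin k → ZMod 2) : |blockB k uu| ≤ 1 := by
  have hWle : (Finset.univ.filter (fun a => uu a ≠ 0)).card ≤ k := by
    have := Finset.card_filter_le (Finset.univ : Finset (Fin k)) (fun a => uu a ≠ 0)
    rwa [Finset.card_univ, Fintype.card_fin] at this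
  rw [blockB_eq, abs_mul, abs_of_nonneg (inv_nonneg.2 (by positivity))]
  set W := (Finset.univ.filter (fun a => uu a ≠ 0)).card
  have h1 : |(k:ℝ) + 1 - 2 * W| ≤ (k:ℝ) + 1 := by
    rw [abs_le]
    have : (W:ℝ) ≤ k := by exact_mod_cast hWle
    have : (0:ℝ) ≤ W := by positivity
    constructor <;> nlinarith
  calc ((k:ℝ)+1)⁻¹ * |(k:ℝ) + 1 - 2 * W| ≤ ((k:ℝ)+1)⁻¹ * ((k:ℝ)+1) :=
        mul_le_mul_of_nonneg_left h1 (inv_nonneg.2 (by positivity))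
    _ = 1 := by field_simp

lemma blockB_abs_le_rho (k : ℕ) (hk : 0 < k) (uu : Fin k → ZMod 2)
    (h : ∃ a, uu a ≠ 0) : |blockB k uu| ≤ ((k:ℝ) - 1) / ((k:ℝ) + 1) := by
  have hWle : (Finset.univ.filter (fun a => uu a ≠ 0)).card ≤ k := by
    have := Finset.card_filter_le (Finset.univ : Finset (Fin k)) (fun a => uu a ≠ 0)
    rwa [Finset.card_univ, Fintype.card_fin] at this
  have hWge : 1 ≤ (Finset.univ.filter (fun a => uu a ≠ 0)).card := by
    obtain ⟨a, ha⟩ := h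
    refine Finset.card_pos.2 ⟨a, ?_⟩
    simp [ha]
  rw [blockB_eq, abs_mul, abs_of_nonneg (inv_nonneg.2 (by positivity))]
  set W := (Finset.univ.filter (fun a => uu a ≠ 0)).card
  have hWleR : (W:ℝ) ≤ k := by exact_mod_cast hWle
  have hWgeR : (1:ℝ) ≤ W := by exact_mod_cast hWge
  have h1 : |(k:ℝ) + 1 - 2 * W| ≤ (k:ℝ) - 1 := by
    rw [abs_le]; constructor <;> nlinarith
  rw [div_eq_inv_mul]
  exact mul_le_mul_of_nonneg_left h1 (inv_nonneg.2 (by positivity))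

lemma Pcol_eq (k m : ℕ) (U : Fin (m+1) → Fin k → ZMod 2) (c : ZMod 2) :
    ∑ g : Fin (m+1) → (Fin k → ZMod 2),
      (∏ i, wgt k (g i)) * (if (∑ i, ∑ a, U i a * g i a) = c then 1 else 0)
    = 1/2 + chi c / 2 * ∏ i, blockB k (U i) := by
  classical
  have step1 : ∀ g : Fin (m+1) → (Fin k → ZMod 2),
      (∏ i, wgt k (g i)) * (if (∑ i, ∑ a, U i a * g i a) = c then 1 else 0)
      = (∏ i, wgt k (g i)) * (1/2)
        + (chi c / 2) * ∏ i, (wgt k (g i) * chi (∑ a, U i a * g i a)) := by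
    intro g
    rw [ind_eq_chi, chi_sum Finset.univ (fun i => ∑ a, U i a * g i a),
      Finset.prod_mul_distrib]
    ring
  rw [Finset.sum_congr rfl (fun g _ => step1 g), Finset.sum_add_distrib,
    ← Finset.sum_mul, ← Finset.mul_sum]
  have hA : ∑ g : Fin (m+1) → (Fin k → ZMod 2), ∏ i, wgt k (g i) = 1 := by
    rw [← Fintype.prod_sum (fun (_ : Fin (m+1)) (v : Fin k → ZMod 2) => wgt k v)]
    simp [sum_wgt]
  have hB : ∑ g : Fin (m+1) → (Fin k → ZMod 2),
      ∏ i, (wgt k (g i) * chi (∑ a, U i a * g i a)) = ∏ i, blockB k (U i) := by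
    rw [← Fintype.prod_sum
      (fun (i : Fin (m+1)) (v : Fin k → ZMod 2) => wgt k v * chi (∑ a, U i a * v a))]
    rfl
  rw [hA, hB]
  ring

lemma prodB_abs_le (k m T : ℕ) (hk : 0 < k) (U : Fin (m+1) → Fin k → ZMod 2)
    (hnz : T ≤ (Finset.univ.filter (fun i : Fin (m+1) => ∃ a, U i a ≠ 0)).card) :
    |∏ i, blockB k (U i)| ≤ (((k:ℝ)-1)/((k:ℝ)+1))^T := by
  classical
  set ρ := ((k:ℝ)-1)/((k:ℝ)+1) with hρ
  have hk1 : (1:ℝ) ≤ k := by exact_mod_cast hk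
  have hρ0 : 0 ≤ ρ := div_nonneg (by linarith) (by positivity)
  have hρ1 : ρ ≤ 1 := by rw [hρ, div_le_one (by positivity)]; linarith
  rw [Finset.abs_prod]
  set s := Finset.univ.filter (fun i : Fin (m+1) => ∃ a, U i a ≠ 0) with hs
  have h1 : ∏ i ∈ s, |blockB k (U i)| ≤ ρ ^ s.card := by
    calc ∏ i ∈ s, |blockB k (U i)| ≤ ∏ _i ∈ s, ρ := by
          refine Finset.prod_le_prod (fun i _ => abs_nonneg _) (fun i hi => ?_)
          rw [hs, Finset.mem_filter] at hi
          exact blockB_abs_le_rho k hk (U i) hi.2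
      _ = ρ ^ s.card := Finset.prod_const ρ
  have h2 : ρ ^ s.card ≤ ρ ^ T := pow_le_pow_of_le_one hρ0 hρ1 hnz
  have h3 : (∏ i ∈ Finset.univ \ s, |blockB k (U i)|) * ∏ i ∈ s, |blockB k (U i)|
      = ∏ i : Fin (m+1), |blockB k (U i)| :=
    Finset.prod_sdiff (Finset.filter_subset _ _)
  have h4 : ∏ i ∈ Finset.univ \ s, |blockB k (U i)| ≤ 1 :=
    Finset.prod_le_one (fun i _ => abs_nonneg _) (fun i _ => blockB_abs_le_one k (U i))
  calc ∏ i : Fin (m+1), |blockB k (U i)|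
      = (∏ i ∈ Finset.univ \ s, |blockB k (U i)|) * ∏ i ∈ s, |blockB k (U i)| := h3.symm
    _ ≤ 1 * (ρ ^ T) := by
        refine mul_le_mul h4 (h1.trans h2) ?_ zero_le_one
        exact Finset.prod_nonneg (fun i _ => abs_nonneg _)
    _ = ρ ^ T := one_mul _

lemma prodB_abs_le_one (k m : ℕ) (U : Fin (m+1) → Fin k → ZMod 2) :
    |∏ i, blockB k (U i)| ≤ 1 := by
  rw [Finset.abs_prod]
  exact Finset.prod_le_one (fun i _ => abs_nonneg _) (fun i _ => blockB_abs_le_one k (U i))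

lemma colP_le (k m T : ℕ) (hk : 0 < k) (U : Fin (m+1) → Fin k → ZMod 2) (c : ZMod 2)
    (hnz : T ≤ (Finset.univ.filter (fun i : Fin (m+1) => ∃ a, U i a ≠ 0)).card) :
    1/2 + chi c / 2 * ∏ i, blockB k (U i)
      ≤ 1/2 + 1/2 * (((k:ℝ)-1)/((k:ℝ)+1))^T := by
  have key := prodB_abs_le k m T hk U hnz
  have h1 : chi c / 2 * ∏ i, blockB k (U i) ≤ 1/2 * (((k:ℝ)-1)/((k:ℝ)+1))^T := by
    calc chi c / 2 * ∏ i, blockB k (U i)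
        ≤ |chi c / 2 * ∏ i, blockB k (U i)| := le_abs_self _
      _ = 1/2 * |∏ i, blockB k (U i)| := by
          rw [abs_mul, abs_div, chi_abs]; norm_num
      _ ≤ 1/2 * (((k:ℝ)-1)/((k:ℝ)+1))^T := by linarith
  linarith

lemma colP_nonneg (k m : ℕ) (U : Fin (m+1) → Fin k → ZMod 2) (c : ZMod 2) :
    0 ≤ 1/2 + chi c / 2 * ∏ i, blockB k (U i) := by
  have key := prodB_abs_le_one k m U
  have h1 : -(1/2 : ℝ) ≤ chi c / 2 * ∏ i, blockB k (U i) := by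
    have : |chi c / 2 * ∏ i, blockB k (U i)| ≤ 1/2 := by
      rw [abs_mul, abs_div, chi_abs]
      norm_num
      linarith
    linarith [neg_abs_le (chi c / 2 * ∏ i, blockB k (U i))]
  linarith

lemma prod_ind {ι : Type*} [Fintype ι] (p : ι → Prop) [DecidablePred p] :
    ∏ i, (if p i then (1:ℝ) else 0) = if (∀ i, p i) then 1 else 0 := by
  by_cases h : ∀ i, p i
  · rw [if_pos h]; exact Finset.prod_eq_one fun i _ => if_pos (h i)
  · rw [if_neg h]
    push_neg at h
    obtain ⟨i, hi⟩ := h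
    exact Finset.prod_eq_zero (Finset.mem_univ i) (if_neg hi)

/-- **Uniform bound on the conditional distribution of the parity-check vector.**
Let `u ∈ F₂^{(m+1)k}` have at least `T ≥ 1` nonzero sub-blocks and let `G` be a random
matrix from the RaS ensemble: all block-columns are independent, each uniformly
distributed over the column vectors of Hamming weight at most 1 (this is the
probability mass function `PG`). Then for every fixed `x ∈ F₂^{(m+1)(n−k)}`,
`Pr{u·G = x} ≤ [1/2 + (1/2)·((k−1)/(k+1))^T]^{(m+1)(n−k)}`. -/
theorem RaS_parity_prob_upper_bound
    (k n m T : ℕ) (hk : 0 < k) (hkn : k < n) (hT : 1 ≤ T)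
    (u : Fin (m + 1) × Fin k → ZMod 2)
    (hnonzero : T ≤ (Finset.univ.filter
      (fun i : Fin (m + 1) => ∃ a : Fin k, u (i, a) ≠ 0)).card)
    (PG : Matrix (Fin (m + 1) × Fin k) (Fin (m + 1) × Fin (n - k)) (ZMod 2) → ℝ)
    (hPG : ∀ G, PG G = ∏ i : Fin (m + 1), ∏ jb : Fin (m + 1) × Fin (n - k),
      (if (Finset.univ.filter (fun a : Fin k => G (i, a) jb = 1)).card ≤ 1
        then ((k : ℝ) + 1)⁻¹ else 0)) :
    ∀ x : Fin (m + 1) × Fin (n - k) → ZMod 2,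
      (∑ G : Matrix (Fin (m + 1) × Fin k) (Fin (m + 1) × Fin (n - k)) (ZMod 2),
        PG G * (if Matrix.vecMul u G = x then 1 else 0))
      ≤ (1 / 2 + (1 / 2) * (((k : ℝ) - 1) / ((k : ℝ) + 1)) ^ T) ^ ((m + 1) * (n - k)) := by
  intro x
  classical
  set F : (Fin (m + 1) × Fin (n - k)) → ((Fin (m + 1) × Fin k → ZMod 2)) → ℝ :=
    fun jb g => (∏ i : Fin (m + 1), wgt k (fun a => g (i, a))) *
      (if (∑ r : Fin (m + 1) × Fin k, u r * g r) = x jb then 1 else 0) with hF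
  have hvm : ∀ (G : Matrix (Fin (m + 1) × Fin k) (Fin (m + 1) × Fin (n - k)) (ZMod 2)) jb,
      Matrix.vecMul u G jb = ∑ r : Fin (m + 1) × Fin k, u r * G r jb := by
    intro G jb
    simp [Matrix.vecMul, dotProduct]
  have step1 : ∀ G : Matrix (Fin (m + 1) × Fin k) (Fin (m + 1) × Fin (n - k)) (ZMod 2),
      PG G * (if Matrix.vecMul u G = x then 1 else 0)
        = ∏ jb : Fin (m + 1) × Fin (n - k), F jb (fun r => G r jb) := by
    intro G
    have hind : (if Matrix.vecMul u G = x then (1:ℝ) else 0)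
        = ∏ jb : Fin (m + 1) × Fin (n - k),
            (if (∑ r : Fin (m + 1) × Fin k, u r * G r jb) = x jb then (1:ℝ) else 0) := by
      rw [prod_ind (fun jb => (∑ r : Fin (m + 1) × Fin k, u r * G r jb) = x jb)]
      by_cases hvx : Matrix.vecMul u G = x
      · rw [if_pos hvx, if_pos (fun jb => by rw [← hvm G jb, hvx])]
      · rw [if_neg hvx, if_neg]
        intro hall
        exact hvx (funext fun jb => by rw [hvm G jb, hall jb])
    rw [hPG G, Finset.prod_comm, hind, ← Finset.prod_mul_distrib]
    exact Finset.prod_congr rfl (fun jb _ => rfl)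
  have step2 : (∑ G : Matrix (Fin (m + 1) × Fin k) (Fin (m + 1) × Fin (n - k)) (ZMod 2),
        PG G * (if Matrix.vecMul u G = x then 1 else 0))
      = ∏ jb : Fin (m + 1) × Fin (n - k), ∑ v : Fin (m + 1) × Fin k → ZMod 2, F jb v := by
    rw [Finset.sum_congr rfl (fun G _ => step1 G)]
    rw [show (∑ G : Matrix (Fin (m + 1) × Fin k) (Fin (m + 1) × Fin (n - k)) (ZMod 2),
          ∏ jb : Fin (m + 1) × Fin (n - k), F jb (fun r => G r jb))
        = ∑ g : (Fin (m + 1) × Fin (n - k)) → (Fin (m + 1) × Fin k → ZMod 2),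
          ∏ jb : Fin (m + 1) × Fin (n - k), F jb (g jb) from
      (Equiv.piComm (fun (_ : Fin (m + 1) × Fin k) (_ : Fin (m + 1) × Fin (n - k)) =>
        ZMod 2)).sum_comp (fun g => ∏ jb : Fin (m + 1) × Fin (n - k), F jb (g jb))]
    exact (Fintype.prod_sum F).symm
  have step3 : ∀ jb : Fin (m + 1) × Fin (n - k),
      (∑ v : Fin (m + 1) × Fin k → ZMod 2, F jb v)
        = 1/2 + chi (x jb) / 2 * ∏ i : Fin (m + 1), blockB k (fun a => u (i, a)) := by
    intro jb
    have hcur : (∑ v : Fin (m + 1) × Fin k → ZMod 2, F jb v)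
        = ∑ h : Fin (m + 1) → (Fin k → ZMod 2), F jb (fun r => h r.1 r.2) :=
      ((Equiv.curry (Fin (m + 1)) (Fin k) (ZMod 2)).symm.sum_comp (F jb)).symm
    rw [hcur]
    have heq : ∀ h : Fin (m + 1) → (Fin k → ZMod 2),
        F jb (fun r => h r.1 r.2)
        = (∏ i : Fin (m + 1), wgt k (h i)) *
          (if (∑ i : Fin (m + 1), ∑ a : Fin k, u (i, a) * h i a) = x jb then 1 else 0) := by
      intro h
      rw [hF]
      simp only
      rw [Fintype.sum_prod_type]
    rw [Finset.sum_congr rfl (fun h _ => heq h)]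
    exact Pcol_eq k m (fun i a => u (i, a)) (x jb)
  rw [step2, Finset.prod_congr rfl (fun jb _ => step3 jb)]
  have hcard : (Finset.univ : Finset (Fin (m + 1) × Fin (n - k))).card = (m + 1) * (n - k) := by
    simp [Finset.card_univ]
  calc ∏ jb : Fin (m + 1) × Fin (n - k),
        (1/2 + chi (x jb) / 2 * ∏ i : Fin (m + 1), blockB k (fun a => u (i, a)))
      ≤ ∏ _jb : Fin (m + 1) × Fin (n - k),
        (1/2 + 1/2 * (((k:ℝ) - 1)/((k:ℝ) + 1))^T) := by
        refine Finset.prod_le_prod (fun jb _ => colP_nonneg k m (fun i a => u (i, a)) (x jb))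
          (fun jb _ => colP_le k m T hk (fun i a => u (i, a)) (x jb) hnonzero)
    _ = (1/2 + 1/2 * (((k:ℝ) - 1)/((k:ℝ) + 1))^T) ^ ((m + 1) * (n - k)) := by
        rw [Finset.prod_const, hcard]
    _ = (1 / 2 + (1 / 2) * (((k : ℝ) - 1) / ((k : ℝ) + 1)) ^ T) ^ ((m + 1) * (n - k)) := by
        norm_num
end
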